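/- arXiv:2212.12312 — 6 statements merged into one kernel-verified Lean document; each statement's English description precedes it below -/
import Mathlib

section
/- (Modified Congestion Lemma) Let A and B be finite simple graphs with |V(A)| = |V(B)|, and let (g, P_g) be an embedding of A into B. Let T be a set of edges of B such that deleting the edges of T from B leaves a graph with exactly two connected components B₁ and B₂, and let A₁ and A₂ be the induced subgraphs of A on the vertex sets g⁻¹(V(B₁)) and g⁻¹(V(B₂)) respectively. Assume: (i) for every edge {x,y} of A with both endpoints in V(A₁) or both endpoints in V(A₂), the walk P_g(x,y) contains no edge of T; (ii) for every edge {x,y} of A with x ∈ V(A₁) and y ∈ V(A₂), the walk P_g(x,y) contains exactly one edge of T; (iii) the number of edges of A with exactly one endpoint in V(A₁) equals θ_A(|V(A₁)|). Then EC_g(T) = Σ_{u ∈ V(A₁)} deg_A(u) − 2|E(A₁)| = Σ_{u ∈ V(A₂)} deg_A(u) − 2|E(A₂)|, and for every embedding (g', P_{g'}) of A into B one has EC_g(T) ≤ EC_{g'}(T). -/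
open scoped Classical

/-- Number of edges of `G` with both endpoints in `S`. -/
noncomputable def interiorCount {V : Type*} [Fintype V] (G : SimpleGraph V)
    (S : Finset V) : ℕ :=
  (G.edgeFinset.filter (fun e => ∀ v ∈ e, v ∈ S)).card

/-- Number of edges of `G` with exactly one endpoint in `S`. -/
noncomputable def boundaryCount {V : Type*} [Fintype V] (G : SimpleGraph V)
    (S : Finset V) : ℕ :=
  (G.edgeFinset.filter (fun e => ∃ x y, e = s(x, y) ∧ x ∈ S ∧ y ∉ S)).card

/-- `θ_G(m)`: minimum number of boundary edges over all `m`-subsets. -/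
noncomputable def minCut {V : Type*} [Fintype V] (G : SimpleGraph V) (m : ℕ) : ℕ :=
  sInf {c | ∃ S : Finset V, S.card = m ∧ c = boundaryCount G S}


section CongestionHelpers

variable {V W : Type*} [Fintype V]

lemma sym2_boundary_iff (S : Finset V) (a b : V) :
    (∃ x y, (s(a,b) : Sym2 V) = s(x,y) ∧ x ∈ S ∧ y ∉ S) ↔
      ((a ∈ S ∧ b ∉ S) ∨ (b ∈ S ∧ a ∉ S)) := by
  constructor
  · rintro ⟨x, y, hxy, hx, hy⟩
    rw [Sym2.eq_iff] at hxy
    rcases hxy with ⟨rfl, rfl⟩ | ⟨rfl, rfl⟩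
    · exact Or.inl ⟨hx, hy⟩
    · exact Or.inr ⟨hx, hy⟩
  · rintro (⟨ha, hb⟩ | ⟨hb, ha⟩)
    · exact ⟨a, b, rfl, ha, hb⟩
    · exact ⟨b, a, Sym2.eq_swap.symm, hb, ha⟩

lemma sym2_interior_iff (S : Finset V) (a b : V) :
    (∀ v ∈ (s(a,b) : Sym2 V), v ∈ S) ↔ (a ∈ S ∧ b ∈ S) := by
  constructor
  · intro h; exact ⟨h a (by simp), h b (by simp)⟩
  · rintro ⟨ha, hb⟩ v hv
    rcases Sym2.mem_iff.mp hv with rfl | rfl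
    exacts [ha, hb]

lemma degree_eq_card_filter (G : SimpleGraph V) (v : V) :
    G.degree v = (G.edgeFinset.filter (fun ε => v ∈ ε)).card := by
  rw [← SimpleGraph.card_incidenceFinset_eq_degree]
  congr 1
  ext e
  simp [SimpleGraph.mem_incidenceFinset, SimpleGraph.incidenceSet,
    SimpleGraph.mem_edgeFinset]

lemma handshake (G : SimpleGraph V) (S : Finset V) :
    ∑ u ∈ S, G.degree u = boundaryCount G S + 2 * interiorCount G S := by
  calc ∑ u ∈ S, G.degree u
      = ∑ u ∈ S, ∑ ε ∈ G.edgeFinset, (if u ∈ ε then 1 else 0) := by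
        simp_rw [degree_eq_card_filter, Finset.card_filter]
    _ = ∑ ε ∈ G.edgeFinset, ∑ u ∈ S, (if u ∈ ε then 1 else 0) := Finset.sum_comm
    _ = ∑ ε ∈ G.edgeFinset,
          ((if (∃ x y, ε = s(x,y) ∧ x ∈ S ∧ y ∉ S) then 1 else 0)
            + 2 * (if (∀ v ∈ ε, v ∈ S) then 1 else 0)) := by
        apply Finset.sum_congr rfl
        intro ε hε
        induction ε using Sym2.ind with
        | _ a b =>
        have hab : a ≠ b :=
          (G.mem_edgeSet.mp (SimpleGraph.mem_edgeFinset.mp hε)).ne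
        have h1 : ∑ u ∈ S, (if u ∈ (s(a,b) : Sym2 V) then (1:ℕ) else 0)
            = (if a ∈ S then 1 else 0) + (if b ∈ S then 1 else 0) := by
          rw [← Finset.card_filter]
          have h2 : S.filter (fun u => u ∈ (s(a,b) : Sym2 V))
              = ({a, b} : Finset V).filter (· ∈ S) := by
            ext u
            simp only [Finset.mem_filter, Sym2.mem_iff, Finset.mem_insert,
              Finset.mem_singleton]
            tauto
          rw [h2]
          by_cases ha : a ∈ S <;> by_cases hb : b ∈ S <;>
            simp [Finset.filter_insert, Finset.filter_singleton, ha, hb, hab]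
        rw [h1, if_congr (sym2_boundary_iff S a b) rfl rfl,
          if_congr (sym2_interior_iff S a b) rfl rfl]
        by_cases ha : a ∈ S <;> by_cases hb : b ∈ S <;> simp [ha, hb]
    _ = boundaryCount G S + 2 * interiorCount G S := by
        rw [boundaryCount, interiorCount, Finset.sum_add_distrib,
          Finset.card_filter, Finset.card_filter, ← Finset.mul_sum]

lemma boundaryCount_compl (G : SimpleGraph V) (S : Finset V) :
    boundaryCount G S = boundaryCount G Sᶜ := by
  unfold boundaryCount
  congr 1
  apply Finset.filter_congr
  intro ε hε
  induction ε using Sym2.ind with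
  | _ a b =>
  rw [sym2_boundary_iff, sym2_boundary_iff]
  simp only [Finset.mem_compl, not_not]
  tauto

end CongestionHelpers

/-- An embedding `(g, P_g)` of a guest graph `A` into a host graph `B`:
a bijection on the vertices together with, for each edge of `A`, a walk in `B`
joining the images of its endpoints (chosen independently of the orientation
of the edge). -/
structure GraphEmbedding {V W : Type*} (A : SimpleGraph V) (B : SimpleGraph W) where
  /-- the vertex bijection -/
  g : V ≃ W
  /-- the walk assigned to each edge of `A` -/
  walk : ∀ x y, A.Adj x y → B.Walk (g x) (g y)
  /-- the walk depends only on the (unordered) edge: both orientations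
  traverse the same set of edges of `B` -/
  walk_symm : ∀ x y (h : A.Adj x y) (e : Sym2 W),
    e ∈ (walk x y h).edges ↔ e ∈ (walk y x h.symm).edges

/-- Edge congestion `EC_g(e)`: the number of edges of `A` whose assigned walk
passes through the edge `e` of `B`. -/
noncomputable def EC {V W : Type*} [Fintype V] {A : SimpleGraph V} {B : SimpleGraph W}
    (f : GraphEmbedding A B) (e : Sym2 W) : ℕ :=
  (A.edgeFinset.filter
    (fun ε => ∃ x y, ∃ h : A.Adj x y, ε = s(x, y) ∧ e ∈ (f.walk x y h).edges)).card

/-- `EC_g(T)` for a set `T` of edges of `B`. -/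
noncomputable def ECset {V W : Type*} [Fintype V] {A : SimpleGraph V} {B : SimpleGraph W}
    (f : GraphEmbedding A B) (T : Finset (Sym2 W)) : ℕ :=
  ∑ e ∈ T, EC f e


section CongestionHelpers2

variable {V W : Type*} [Fintype V] {A : SimpleGraph V} {B : SimpleGraph W}

lemma ECset_eq_sum (f : GraphEmbedding A B) (T : Finset (Sym2 W)) :
    ECset f T = ∑ ε ∈ A.edgeFinset,
      (T.filter (fun e => ∃ x y, ∃ h : A.Adj x y,
        ε = s(x,y) ∧ e ∈ (f.walk x y h).edges)).card := by
  unfold ECset EC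
  simp_rw [Finset.card_filter]
  exact Finset.sum_comm

lemma filter_walk_eq (f : GraphEmbedding A B) {a b : V} (h : A.Adj a b)
    (T : Finset (Sym2 W)) :
    T.filter (fun e => ∃ x y, ∃ h' : A.Adj x y,
        (s(a,b) : Sym2 V) = s(x,y) ∧ e ∈ (f.walk x y h').edges)
      = T.filter (fun e => e ∈ (f.walk a b h).edges) := by
  apply Finset.filter_congr
  intro e _
  constructor
  · rintro ⟨x, y, h', hxy, he⟩
    rw [Sym2.eq_iff] at hxy
    rcases hxy with ⟨rfl, rfl⟩ | ⟨rfl, rfl⟩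
    · exact he
    · exact (f.walk_symm b a h' e).mp he
  · intro he
    exact ⟨a, b, h, rfl, he⟩

end CongestionHelpers2

/-- **Modified Congestion Lemma.** -/
theorem modified_congestion_lemma {V W : Type*} [Fintype V] [Fintype W]
    (A : SimpleGraph V) (B : SimpleGraph W)
    (hcard : Fintype.card V = Fintype.card W)
    (f : GraphEmbedding A B)
    (T : Finset (Sym2 W)) (hTB : T ⊆ B.edgeFinset)
    -- the two connected components of `B` minus `T`, described by their vertex sets
    (S₁ S₂ : Finset W)
    (hne₁ : S₁.Nonempty) (hne₂ : S₂.Nonempty)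
    (hdisj : Disjoint S₁ S₂) (hcover : S₁ ∪ S₂ = Finset.univ)
    (hcomp : ∀ x y : W, (B.deleteEdges (↑T : Set (Sym2 W))).Reachable x y ↔
      ((x ∈ S₁ ∧ y ∈ S₁) ∨ (x ∈ S₂ ∧ y ∈ S₂)))
    -- condition (i)
    (hi : ∀ x y (h : A.Adj x y),
      ((f.g x ∈ S₁ ∧ f.g y ∈ S₁) ∨ (f.g x ∈ S₂ ∧ f.g y ∈ S₂)) →
      ∀ e ∈ T, e ∉ (f.walk x y h).edges)
    -- condition (ii)
    (hii : ∀ x y (h : A.Adj x y), f.g x ∈ S₁ → f.g y ∈ S₂ →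
      ∃! e, e ∈ T ∧ e ∈ (f.walk x y h).edges)
    -- condition (iii): the preimages of the components are optimal sets
    (hiii : boundaryCount A (S₁.image f.g.symm) =
      minCut A (S₁.image f.g.symm).card) :
    ECset f T =
        (∑ u ∈ S₁.image f.g.symm, A.degree u)
          - 2 * interiorCount A (S₁.image f.g.symm) ∧
    ECset f T =
        (∑ u ∈ S₂.image f.g.symm, A.degree u)
          - 2 * interiorCount A (S₂.image f.g.symm) ∧
    ∀ f' : GraphEmbedding A B, ECset f T ≤ ECset f' T := by
  classical
  have hmem : ∀ (g0 : V ≃ W) (S : Finset W) (u : V),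
      u ∈ S.image g0.symm ↔ g0 u ∈ S := by
    intro g0 S u
    simp only [Finset.mem_image]
    constructor
    · rintro ⟨w, hw, rfl⟩; simpa using hw
    · intro h; exact ⟨g0 u, h, by simp⟩
  have hS2 : ∀ w, w ∈ S₂ ↔ w ∉ S₁ := by
    intro w
    constructor
    · intro h2 h1; exact (Finset.disjoint_left.mp hdisj) h1 h2
    · intro h1
      have hw : w ∈ S₁ ∪ S₂ := by rw [hcover]; exact Finset.mem_univ w
      rcases Finset.mem_union.mp hw with h | h
      · exact absurd h h1
      · exact h
  set P₁ : Finset V := S₁.image f.g.symm with hP₁def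
  -- exact count for f
  have hcount : ECset f T = boundaryCount A P₁ := by
    rw [ECset_eq_sum, boundaryCount, Finset.card_filter]
    apply Finset.sum_congr rfl
    intro ε hε
    induction ε using Sym2.ind with
    | _ a b =>
    have hadj : A.Adj a b := A.mem_edgeSet.mp (SimpleGraph.mem_edgeFinset.mp hε)
    rw [filter_walk_eq f hadj]
    by_cases hc : ((a ∈ P₁ ∧ b ∉ P₁) ∨ (b ∈ P₁ ∧ a ∉ P₁))
    · rw [if_pos ((sym2_boundary_iff P₁ a b).mpr hc)]
      rcases hc with ⟨ha, hb⟩ | ⟨hb, ha⟩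
      · have ha' : f.g a ∈ S₁ := (hmem _ _ _).mp ha
        have hb' : f.g b ∈ S₂ := (hS2 _).mpr (fun h => hb ((hmem _ _ _).mpr h))
        obtain ⟨e₀, ⟨he₀T, he₀w⟩, huniq⟩ := hii a b hadj ha' hb'
        rw [Finset.card_eq_one]
        refine ⟨e₀, ?_⟩
        ext e
        simp only [Finset.mem_filter, Finset.mem_singleton]
        constructor
        · rintro ⟨h1, h2⟩; exact huniq e ⟨h1, h2⟩
        · rintro rfl; exact ⟨he₀T, he₀w⟩
      · have hfe : T.filter (fun e => e ∈ (f.walk a b hadj).edges)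
            = T.filter (fun e => e ∈ (f.walk b a hadj.symm).edges) := by
          apply Finset.filter_congr
          intro e _
          exact f.walk_symm a b hadj e
        rw [hfe]
        have hb' : f.g b ∈ S₁ := (hmem _ _ _).mp hb
        have ha' : f.g a ∈ S₂ := (hS2 _).mpr (fun h => ha ((hmem _ _ _).mpr h))
        obtain ⟨e₀, ⟨he₀T, he₀w⟩, huniq⟩ := hii b a hadj.symm hb' ha'
        rw [Finset.card_eq_one]
        refine ⟨e₀, ?_⟩
        ext e
        simp only [Finset.mem_filter, Finset.mem_singleton]
        constructor
        · rintro ⟨h1, h2⟩; exact huniq e ⟨h1, h2⟩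
        · rintro rfl; exact ⟨he₀T, he₀w⟩
    · rw [if_neg (fun hx => hc ((sym2_boundary_iff P₁ a b).mp hx))]
      rw [Finset.card_eq_zero, Finset.filter_eq_empty_iff]
      intro e heT
      have hor : (f.g a ∈ S₁ ∧ f.g b ∈ S₁) ∨ (f.g a ∈ S₂ ∧ f.g b ∈ S₂) := by
        by_cases ha : a ∈ P₁ <;> by_cases hb : b ∈ P₁
        · exact Or.inl ⟨(hmem _ _ _).mp ha, (hmem _ _ _).mp hb⟩
        · exact absurd (Or.inl ⟨ha, hb⟩) hc
        · exact absurd (Or.inr ⟨hb, ha⟩) hc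
        · exact Or.inr ⟨(hS2 _).mpr (fun h => ha ((hmem _ _ _).mpr h)),
            (hS2 _).mpr (fun h => hb ((hmem _ _ _).mpr h))⟩
      exact hi a b hadj hor e heT
  -- lower bound for arbitrary embeddings
  have hlower : ∀ f' : GraphEmbedding A B,
      boundaryCount A (S₁.image f'.g.symm) ≤ ECset f' T := by
    intro f'
    rw [ECset_eq_sum, boundaryCount, Finset.card_filter]
    apply Finset.sum_le_sum
    intro ε hε
    induction ε using Sym2.ind with
    | _ a b =>
    have hadj : A.Adj a b := A.mem_edgeSet.mp (SimpleGraph.mem_edgeFinset.mp hε)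
    rw [filter_walk_eq f' hadj]
    by_cases hc : (∃ x y, (s(a,b) : Sym2 V) = s(x,y) ∧
        x ∈ S₁.image f'.g.symm ∧ y ∉ S₁.image f'.g.symm)
    · rw [if_pos hc]
      rw [Nat.one_le_iff_ne_zero]
      intro h0
      rw [Finset.card_eq_zero, Finset.filter_eq_empty_iff] at h0
      have hreach : (B.deleteEdges (↑T : Set (Sym2 W))).Reachable (f'.g a) (f'.g b) :=
        ⟨(f'.walk a b hadj).toDeleteEdges (↑T : Set (Sym2 W))
          (fun e he heT => h0 (Finset.mem_coe.mp heT) he)⟩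
      have hboth := (hcomp _ _).mp hreach
      rw [sym2_boundary_iff] at hc
      rcases hc with ⟨ha, hb⟩ | ⟨hb, ha⟩
      · have ha' : f'.g a ∈ S₁ := (hmem _ _ _).mp ha
        have hb' : f'.g b ∉ S₁ := fun h => hb ((hmem _ _ _).mpr h)
        rcases hboth with ⟨_, h⟩ | ⟨h, _⟩
        · exact hb' h
        · exact (hS2 _).mp h ha'
      · have hb' : f'.g b ∈ S₁ := (hmem _ _ _).mp hb
        have ha' : f'.g a ∉ S₁ := fun h => ha ((hmem _ _ _).mpr h)
        rcases hboth with ⟨h, _⟩ | ⟨_, h⟩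
        · exact ha' h
        · exact (hS2 _).mp h hb'
    · rw [if_neg hc]
      exact Nat.zero_le _
  have hP2c : S₂.image f.g.symm = P₁ᶜ := by
    ext u
    rw [hmem, Finset.mem_compl, hP₁def, hmem, hS2]
  have hhs1 := handshake A P₁
  have hhs2 := handshake A (S₂.image f.g.symm)
  have hb2 : boundaryCount A (S₂.image f.g.symm) = boundaryCount A P₁ := by
    rw [hP2c, ← boundaryCount_compl]
  refine ⟨by omega, by omega, ?_⟩
  intro f'
  have hcard' : (S₁.image f'.g.symm).card = P₁.card := by
    rw [Finset.card_image_of_injective _ f'.g.symm.injective, hP₁def,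
      Finset.card_image_of_injective _ f.g.symm.injective]
  have hmin : minCut A P₁.card ≤ boundaryCount A (S₁.image f'.g.symm) :=
    Nat.sInf_le ⟨S₁.image f'.g.symm, hcard', rfl⟩
  calc ECset f T = boundaryCount A P₁ := hcount
    _ = minCut A P₁.card := hiii
    _ ≤ boundaryCount A (S₁.image f'.g.symm) := hmin
    _ ≤ ECset f' T := hlower f'
end

section
/- (Partition Lemma) Let A and B be finite connected simple graphs with |V(A)| = |V(B)|, and let (g, P_g) be an embedding of A into B. Suppose {X₁, X₂, …, X_p} is a partition of the edge set E(B) such that for each i, deleting the edges of X_i from B leaves exactly two connected components and X_i satisfies conditions (i)–(iii) of the Modified Congestion Lemma with respect to (g, P_g): (i) for every edge {x,y} of A whose endpoints both map into the same component the walk P_g(x,y) contains no edge of X_i; (ii) for every edge {x,y} of A whose endpoints map into different components the walk P_g(x,y) contains exactly one edge of X_i; (iii) the preimage under g of the vertex set of each component has minimum edge boundary in A among all vertex subsets of the same cardinality. Then Σ_{i=1}^{p} EC_g(X_i) = WL(A,B). -/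
open scoped Classical

/-- The wirelength `WL(A,B)`: the minimum over all bijections `h` of the total
distance in `B` between the images of the endpoints of the edges of `A`. -/
noncomputable def wirelength {V W : Type*} [Fintype V] [Fintype W]
    (A : SimpleGraph V) (B : SimpleGraph W) : ℕ :=
  sInf {c | ∃ h : V ≃ W, c = ∑ e ∈ A.edgeFinset,
    Sym2.lift ⟨fun x y => B.dist (h x) (h y),
      fun x y => SimpleGraph.dist_comm⟩ e}

/-!
For any bijection `h`, a shortest path from `h x` to `h y` has to use an edge of every cut
`X i` whose sides separate `h x` from `h y`, and the cuts are disjoint, so `d_B(h x, h y)` is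
at least the number of separating cuts. Summing over the edges of `A` and exchanging the sums,
the cost of `h` is at least `∑ i |∂_A(h⁻¹ S i)| ≥ ∑ i θ_A(|S i|)`. For the embedding `g`,
conditions (i) and (ii) turn `EC_g(X i)` into `|∂_A(g⁻¹ S i)|`, which is `θ_A(|S i|)` by (iii),
and they let the walk `P_g(x, y)`, hence the path it contains, use at most one edge of each cut
and only edges of separating cuts: the cost of `g` is at most `∑ i EC_g(X i)`.
-/
open Finset SimpleGraph Function

def Crosses {W : Type*} (S : Finset W) (e : Sym2 W) : Prop :=
  ∃ x y, e = s(x, y) ∧ x ∈ S ∧ y ∉ S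

theorem crosses_mk_iff {W : Type*} {S : Finset W} {x y : W} :
    Crosses S s(x, y) ↔ (x ∈ S ↔ y ∉ S) := by
  constructor
  · rintro ⟨a, b, hab, ha, hb⟩
    rcases Sym2.eq_iff.mp hab with ⟨rfl, rfl⟩ | ⟨rfl, rfl⟩ <;> tauto
  · intro h
    by_cases hx : x ∈ S
    · exact ⟨x, y, rfl, hx, h.mp hx⟩
    · exact ⟨y, x, Sym2.eq_swap, not_not.mp (mt h.mpr hx), hx⟩

theorem crosses_image_symm_iff {V W : Type*} {S : Finset W} (h : V ≃ W) (e : Sym2 V) :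
    Crosses (S.image h.symm) e ↔ Crosses S (e.map h) := by
  induction e using Sym2.ind with
  | _ x y => simp [crosses_mk_iff, Equiv.symm_apply_eq]

theorem boundaryCount_eq_card_crosses {V : Type*} [Fintype V] (G : SimpleGraph V)
    (S : Finset V) : boundaryCount G S = #{e ∈ G.edgeFinset | Crosses S e} :=
  congrArg card (filter_congr fun _ _ => Iff.rfl)

theorem boundaryCount_image_symm {V W : Type*} [Fintype V] (G : SimpleGraph V)
    (S : Finset W) (h : V ≃ W) :
    boundaryCount G (S.image h.symm) = #{e ∈ G.edgeFinset | Crosses S (e.map h)} := by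
  simp only [boundaryCount_eq_card_crosses, crosses_image_symm_iff]

theorem minCut_card_le_boundaryCount {V : Type*} [Fintype V] (G : SimpleGraph V)
    (S : Finset V) : minCut G #S ≤ boundaryCount G S :=
  Nat.sInf_le ⟨S, rfl, rfl⟩

section Cuts

variable {W ι : Type*} {B : SimpleGraph W}

theorem SimpleGraph.Walk.exists_mem_edges_of_crosses {T : Finset (Sym2 W)} {S : Finset W}
    (hsep : ∀ x y, (B.deleteEdges ↑T).Reachable x y → (x ∈ S ↔ y ∈ S))
    {u v : W} (q : B.Walk u v) (hc : Crosses S s(u, v)) : ∃ e ∈ T, e ∈ q.edges := by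
  by_contra! hq
  have := hsep u v ⟨q.toDeleteEdges _ fun e he heT => hq e heT he⟩
  rw [crosses_mk_iff] at hc
  tauto

variable [Fintype ι] {X : ι → Finset (Sym2 W)} {S : ι → Finset W}

theorem SimpleGraph.Walk.card_crosses_le_length (hX : Pairwise (Disjoint on X))
    (hsep : ∀ i x y, (B.deleteEdges ↑(X i)).Reachable x y → (x ∈ S i ↔ y ∈ S i))
    {u v : W} (q : B.Walk u v) : #{i | Crosses (S i) s(u, v)} ≤ q.length :=
  calc #{i | Crosses (S i) s(u, v)}
      ≤ #q.edges.toFinset := by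
        refine card_le_card_of_forall_subsingleton (fun i e => e ∈ X i) (fun i hi => ?_)
          fun e _ i hi j hj => by_contra fun hij => Finset.disjoint_left.mp (hX hij) hi.2 hj.2
        obtain ⟨e, heX, heq⟩ := q.exists_mem_edges_of_crosses (hsep i) (mem_filter.mp hi).2
        exact ⟨e, List.mem_toFinset.mpr heq, heX⟩
    _ ≤ q.edges.length := List.toFinset_card_le _
    _ = q.length := q.length_edges

theorem card_crosses_le_dist (hX : Pairwise (Disjoint on X))
    (hsep : ∀ i x y, (B.deleteEdges ↑(X i)).Reachable x y → (x ∈ S i ↔ y ∈ S i))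
    {u v : W} (huv : B.Reachable u v) : #{i | Crosses (S i) s(u, v)} ≤ B.dist u v := by
  obtain ⟨q, hq⟩ := huv.exists_walk_length_eq_dist
  exact hq ▸ q.card_crosses_le_length hX hsep

theorem dist_le_card_of_card_edges_le_one (hcover : ∀ e ∈ B.edgeSet, ∃ i, e ∈ X i)
    {u v : W} (w : B.Walk u v) (hone : ∀ i, #{e ∈ X i | e ∈ w.edges} ≤ 1) :
    B.dist u v ≤ #{i | ∃ e ∈ X i, e ∈ w.edges} :=
  calc B.dist u v
      ≤ w.bypass.length := dist_le _
    _ = #w.bypass.edges.toFinset := by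
        rw [← Walk.length_edges, List.toFinset_card_of_nodup w.bypass_isPath.edges_nodup]
    _ ≤ #{i | ∃ e ∈ X i, e ∈ w.edges} := by
        refine card_le_card_of_forall_subsingleton (fun e i => e ∈ X i) (fun e he => ?_)
          fun i _ e he e' he' => card_le_one.mp (hone i) e ?_ e' ?_
        · have hew := w.edges_bypass_subset_edges (List.mem_toFinset.mp he)
          obtain ⟨i, hi⟩ := hcover e (w.edges_subset_edgeSet hew)
          exact ⟨i, mem_filter.mpr ⟨mem_univ i, e, hi, hew⟩, hi⟩
        · exact mem_filter.mpr ⟨he.2, w.edges_bypass_subset_edges (List.mem_toFinset.mp he.1)⟩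
        · exact mem_filter.mpr ⟨he'.2, w.edges_bypass_subset_edges (List.mem_toFinset.mp he'.1)⟩

end Cuts

namespace GraphEmbedding

variable {V W : Type*} {A : SimpleGraph V} {B : SimpleGraph W} (f : GraphEmbedding A B)

def Routes (ε : Sym2 V) (e : Sym2 W) : Prop :=
  ∃ x y, ∃ h : A.Adj x y, ε = s(x, y) ∧ e ∈ (f.walk x y h).edges

theorem routes_mk_iff {x y : V} (h : A.Adj x y) {e : Sym2 W} :
    f.Routes s(x, y) e ↔ e ∈ (f.walk x y h).edges := by
  refine ⟨?_, fun he => ⟨x, y, h, rfl, he⟩⟩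
  rintro ⟨a, b, h', hab, he⟩
  rcases Sym2.eq_iff.mp hab with ⟨rfl, rfl⟩ | ⟨rfl, rfl⟩
  · exact he
  · exact (f.walk_symm x y h e).mpr he

theorem ECset_eq_sum_card_routes [Fintype V] (T : Finset (Sym2 W)) :
    ECset f T = ∑ ε ∈ A.edgeFinset, #{e ∈ T | f.Routes ε e} :=
  calc ECset f T
      = ∑ e ∈ T, #(A.edgeFinset.bipartiteBelow f.Routes e) :=
        sum_congr rfl fun _ _ => congrArg card (filter_congr fun _ _ => Iff.rfl)
    _ = ∑ ε ∈ A.edgeFinset, #{e ∈ T | f.Routes ε e} :=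
        (sum_card_bipartiteAbove_eq_sum_card_bipartiteBelow _).symm

/-- Conditions (i) and (ii) of the Modified Congestion Lemma for the cut `T` between `S`
and `Sᶜ`. -/
structure CrossesOnce (T : Finset (Sym2 W)) (S : Finset W) : Prop where
  not_mem_of_iff : ∀ x y (h : A.Adj x y), (f.g x ∈ S ↔ f.g y ∈ S) →
    ∀ e ∈ T, e ∉ (f.walk x y h).edges
  existsUnique : ∀ x y (h : A.Adj x y), f.g x ∈ S → f.g y ∉ S →
    ∃! e, e ∈ T ∧ e ∈ (f.walk x y h).edges

variable {f}

theorem CrossesOnce.card_filter_mem_walk_edges {T : Finset (Sym2 W)} {S : Finset W}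
    (hT : f.CrossesOnce T S) {x y : V} (h : A.Adj x y) :
    #{e ∈ T | e ∈ (f.walk x y h).edges} = if Crosses S s(f.g x, f.g y) then 1 else 0 := by
  rw [crosses_mk_iff]
  split_ifs with hc
  · by_cases hx : f.g x ∈ S
    · simpa only [card_eq_one_iff_existsUnique, mem_filter] using
        hT.existsUnique x y h hx (hc.mp hx)
    · have hy : f.g y ∈ S := by tauto
      rw [← congrArg card (filter_congr fun e _ => f.walk_symm y x h.symm e)]
      simpa only [card_eq_one_iff_existsUnique, mem_filter] using
        hT.existsUnique y x h.symm hy hx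
  · exact card_eq_zero.mpr (filter_eq_empty_iff.mpr (hT.not_mem_of_iff x y h (by tauto)))

theorem CrossesOnce.ECset_eq_boundaryCount [Fintype V] {T : Finset (Sym2 W)} {S : Finset W}
    (hT : f.CrossesOnce T S) : ECset f T = boundaryCount A (S.image f.g.symm) := by
  rw [ECset_eq_sum_card_routes, boundaryCount_image_symm, card_filter]
  refine sum_congr rfl fun ε hε => ?_
  induction ε using Sym2.ind with
  | _ x y =>
    have h : A.Adj x y := mem_edgeFinset.mp hε
    simp only [f.routes_mk_iff h, Sym2.map_mk]
    exact hT.card_filter_mem_walk_edges h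

theorem dist_le_card_crosses {ι : Type*} [Fintype ι] {X : ι → Finset (Sym2 W)}
    {S : ι → Finset W} (hcover : ∀ e ∈ B.edgeSet, ∃ i, e ∈ X i)
    (hX : ∀ i, f.CrossesOnce (X i) (S i)) {x y : V} (h : A.Adj x y) :
    B.dist (f.g x) (f.g y) ≤ #{i | Crosses (S i) s(f.g x, f.g y)} := by
  refine (dist_le_card_of_card_edges_le_one hcover (f.walk x y h) fun i => ?_).trans
    (card_le_card fun i => ?_)
  · rw [(hX i).card_filter_mem_walk_edges h]
    split_ifs <;> omega
  · simp only [mem_filter, mem_univ, true_and, crosses_mk_iff]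
    rintro ⟨e, heX, hew⟩
    by_contra hc
    exact (hX i).not_mem_of_iff x y h (by tauto) e heX hew

end GraphEmbedding

section Wirelength

variable {V W ι : Type*} [Fintype V] [Fintype ι] (A : SimpleGraph V) (B : SimpleGraph W)

noncomputable def wirelengthOf (h : V ≃ W) : ℕ :=
  ∑ e ∈ A.edgeFinset,
    Sym2.lift ⟨fun x y => B.dist (h x) (h y), fun _ _ => SimpleGraph.dist_comm⟩ e

theorem wirelength_eq_of_forall_le [Fintype W] {N : ℕ} (h₀ : ∃ h, wirelengthOf A B h ≤ N)
    (h₁ : ∀ h, N ≤ wirelengthOf A B h) : wirelength A B = N := by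
  obtain ⟨g, hg⟩ := h₀
  change sInf {c | ∃ h, c = wirelengthOf A B h} = N
  exact le_antisymm (le_trans (Nat.sInf_le ⟨g, rfl⟩) hg)
    (le_csInf ⟨_, g, rfl⟩ (by rintro _ ⟨h, rfl⟩; exact h₁ h))

theorem sum_boundaryCount_image_symm (S : ι → Finset W) (h : V ≃ W) :
    ∑ i, boundaryCount A ((S i).image h.symm) =
      ∑ ε ∈ A.edgeFinset, #{i | Crosses (S i) (ε.map h)} := by
  simp only [boundaryCount_image_symm]
  exact sum_card_bipartiteAbove_eq_sum_card_bipartiteBelow _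

variable {A B}

theorem sum_boundaryCount_le_wirelengthOf (hB : B.Connected) {X : ι → Finset (Sym2 W)}
    {S : ι → Finset W} (hX : Pairwise (Disjoint on X))
    (hsep : ∀ i x y, (B.deleteEdges ↑(X i)).Reachable x y → (x ∈ S i ↔ y ∈ S i)) (h : V ≃ W) :
    ∑ i, boundaryCount A ((S i).image h.symm) ≤ wirelengthOf A B h := by
  rw [sum_boundaryCount_image_symm]
  refine sum_le_sum fun ε _ => ?_
  induction ε using Sym2.ind with
  | _ x y => exact card_crosses_le_dist hX hsep (hB.preconnected _ _)

theorem GraphEmbedding.wirelengthOf_le_sum_boundaryCount (f : GraphEmbedding A B)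
    {X : ι → Finset (Sym2 W)} {S : ι → Finset W} (hcover : ∀ e ∈ B.edgeSet, ∃ i, e ∈ X i)
    (hX : ∀ i, f.CrossesOnce (X i) (S i)) :
    wirelengthOf A B f.g ≤ ∑ i, boundaryCount A ((S i).image f.g.symm) := by
  rw [sum_boundaryCount_image_symm]
  refine sum_le_sum fun ε hε => ?_
  induction ε using Sym2.ind with
  | _ x y => exact f.dist_le_card_crosses hcover hX (mem_edgeFinset.mp hε)

end Wirelength

theorem partition_lemma_general {V W : Type*} [Fintype V] [Fintype W]
    (A : SimpleGraph V) (B : SimpleGraph W)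
    (hB : B.Connected)
    (f : GraphEmbedding A B)
    (p : ℕ) (X : Fin p → Finset (Sym2 W))
    -- `{X 1, …, X p}` is a partition of `E(B)`
    (hXdisj : ∀ i j, i ≠ j → Disjoint (X i) (X j))
    (hXcover : ∀ e, e ∈ B.edgeFinset ↔ ∃ i, e ∈ X i)
    -- the two connected components of `B` minus `X i`
    (S₁ S₂ : Fin p → Finset W)
    (hdisj : ∀ i, Disjoint (S₁ i) (S₂ i))
    (hcover : ∀ i, S₁ i ∪ S₂ i = Finset.univ)
    (hcomp : ∀ i, ∀ x y : W,
      (B.deleteEdges (↑(X i) : Set (Sym2 W))).Reachable x y ↔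
        ((x ∈ S₁ i ∧ y ∈ S₁ i) ∨ (x ∈ S₂ i ∧ y ∈ S₂ i)))
    -- condition (i)
    (hi : ∀ i, ∀ x y (h : A.Adj x y),
      ((f.g x ∈ S₁ i ∧ f.g y ∈ S₁ i) ∨ (f.g x ∈ S₂ i ∧ f.g y ∈ S₂ i)) →
      ∀ e ∈ X i, e ∉ (f.walk x y h).edges)
    -- condition (ii)
    (hii : ∀ i, ∀ x y (h : A.Adj x y), f.g x ∈ S₁ i → f.g y ∈ S₂ i →
      ∃! e, e ∈ X i ∧ e ∈ (f.walk x y h).edges)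
    -- condition (iii): the preimages of the components are optimal sets
    (hiii₁ : ∀ i, boundaryCount A ((S₁ i).image f.g.symm) =
      minCut A ((S₁ i).image f.g.symm).card) :
    ∑ i, ECset f (X i) = wirelength A B := by
  have hS₂ : ∀ i w, w ∈ S₂ i ↔ w ∉ S₁ i := fun i w => by
    rw [← (IsCompl.mk (hdisj i) (codisjoint_iff.mpr (hcover i))).compl_eq, mem_compl]
  simp only [hS₂, ← iff_iff_and_or_not_and_not] at hcomp hi hii
  have hcut : ∀ i, f.CrossesOnce (X i) (S₁ i) := fun i => ⟨hi i, hii i⟩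
  have hcoverB : ∀ e ∈ B.edgeSet, ∃ i, e ∈ X i := fun e he =>
    (hXcover e).mp (mem_edgeFinset.mpr he)
  rw [sum_congr rfl fun i _ => (hcut i).ECset_eq_boundaryCount]
  refine (wirelength_eq_of_forall_le A B ⟨f.g, f.wirelengthOf_le_sum_boundaryCount hcoverB hcut⟩
    fun h => ?_).symm
  calc ∑ i, boundaryCount A ((S₁ i).image f.g.symm)
      = ∑ i, minCut A #((S₁ i).image h.symm) := by
        simp only [hiii₁, card_image_of_injective _ (Equiv.injective _)]
    _ ≤ ∑ i, boundaryCount A ((S₁ i).image h.symm) :=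
        sum_le_sum fun i _ => minCut_card_le_boundaryCount A _
    _ ≤ wirelengthOf A B h :=
        sum_boundaryCount_le_wirelengthOf hB (fun i j => hXdisj i j)
          (fun i x y => (hcomp i x y).1) h

/-- **Partition Lemma.** If the edge set of `B` is partitioned into edge cuts
`X 1, …, X p`, each of which separates `B` into exactly two connected components
and satisfies conditions (i)–(iii) of the Modified Congestion Lemma with
respect to the embedding `f`, then `∑ i, EC_f(X i) = WL(A,B)`. -/
theorem partition_lemma {V W : Type*} [Fintype V] [Fintype W]
    (A : SimpleGraph V) (B : SimpleGraph W)
    (hA : A.Connected) (hB : B.Connected)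
    (hcard : Fintype.card V = Fintype.card W)
    (f : GraphEmbedding A B)
    (p : ℕ) (X : Fin p → Finset (Sym2 W))
    -- `{X 1, …, X p}` is a partition of `E(B)`
    (hXne : ∀ i, (X i).Nonempty)
    (hXdisj : ∀ i j, i ≠ j → Disjoint (X i) (X j))
    (hXcover : ∀ e, e ∈ B.edgeFinset ↔ ∃ i, e ∈ X i)
    -- the two connected components of `B` minus `X i`
    (S₁ S₂ : Fin p → Finset W)
    (hne₁ : ∀ i, (S₁ i).Nonempty) (hne₂ : ∀ i, (S₂ i).Nonempty)
    (hdisj : ∀ i, Disjoint (S₁ i) (S₂ i))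
    (hcover : ∀ i, S₁ i ∪ S₂ i = Finset.univ)
    (hcomp : ∀ i, ∀ x y : W,
      (B.deleteEdges (↑(X i) : Set (Sym2 W))).Reachable x y ↔
        ((x ∈ S₁ i ∧ y ∈ S₁ i) ∨ (x ∈ S₂ i ∧ y ∈ S₂ i)))
    -- condition (i)
    (hi : ∀ i, ∀ x y (h : A.Adj x y),
      ((f.g x ∈ S₁ i ∧ f.g y ∈ S₁ i) ∨ (f.g x ∈ S₂ i ∧ f.g y ∈ S₂ i)) →
      ∀ e ∈ X i, e ∉ (f.walk x y h).edges)
    -- condition (ii)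
    (hii : ∀ i, ∀ x y (h : A.Adj x y), f.g x ∈ S₁ i → f.g y ∈ S₂ i →
      ∃! e, e ∈ X i ∧ e ∈ (f.walk x y h).edges)
    -- condition (iii): the preimages of the components are optimal sets
    (hiii₁ : ∀ i, boundaryCount A ((S₁ i).image f.g.symm) =
      minCut A ((S₁ i).image f.g.symm).card)
    (hiii₂ : ∀ i, boundaryCount A ((S₂ i).image f.g.symm) =
      minCut A ((S₂ i).image f.g.symm).card) :
    ∑ i, ECset f (X i) = wirelength A B :=
  partition_lemma_general A B hB f p X hXdisj hXcover S₁ S₂ hdisj hcover hcomp hi hii hiii₁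
end

section
/- Let Q^s be the s-dimensional hypercube, s ≥ 1. For every j with 1 ≤ j ≤ 2^s and every subset S of V(Q^s) with |S| = j, the number of edges of Q^s with both endpoints in S is at most the number of edges of Q^s with both endpoints in L_j; that is, L_j is an optimal set on j vertices for the maximum subgraph problem in Q^s. -/
/-!
Split a finite set `S ⊆ ℕ` by the lowest binary digit into `A = {a | 2a ∈ S}` and
`B = {b | 2b + 1 ∈ S}`. The hypercube edges inside `S` are the edges inside `A`, those inside `B`
(both of one dimension less), and the edges `{2a, 2a + 1}` with `a ∈ A ∩ B`. Writing `e S` for the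
number of edges inside `S` and `f j = e {0, …, j - 1}`, induction on the dimension gives
`e S ≤ f |A| + f |B| + min |A| |B|`. The same splitting of an initial segment gives
`f n = f ⌈n/2⌉ + f ⌊n/2⌋ + ⌊n/2⌋`, and this recursion alone yields
`f a + f b + min a b ≤ f (a + b)` by strong induction on `a + b`, pairing `⌈a/2⌉` with `⌊b/2⌋`
and `⌊a/2⌋` with `⌈b/2⌉`.
-/

open scoped Classical

/-- The `s`-dimensional hypercube `Q^s`, with vertices identified with the
integers `0, 1, …, 2^s − 1` via binary representation: two vertices are
adjacent iff they differ in exactly one coordinate, i.e. iff their bitwise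
xor is a power `2^i` with `i < s`. -/
def hypercubeGraph (s : ℕ) : SimpleGraph (Fin (2 ^ s)) :=
  SimpleGraph.fromRel (fun u v => ∃ i < s, u.val ^^^ v.val = 2 ^ i)

open Finset

def CubeAdj (u v : ℕ) : Prop := ∃ i, u ^^^ v = 2 ^ i

lemma CubeAdj.symm {u v : ℕ} (h : CubeAdj u v) : CubeAdj v u := by
  rwa [CubeAdj, Nat.xor_comm]

lemma two_mul_xor_two_mul (a b : ℕ) : 2 * a ^^^ 2 * b = 2 * (a ^^^ b) := by
  simpa [Nat.bit_val] using Nat.xor_bit false a false b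

lemma two_mul_add_one_xor_two_mul_add_one (a b : ℕ) :
    (2 * a + 1) ^^^ (2 * b + 1) = 2 * (a ^^^ b) := by
  simpa [Nat.bit_val] using Nat.xor_bit true a true b

lemma two_mul_xor_two_mul_add_one (a b : ℕ) : 2 * a ^^^ (2 * b + 1) = 2 * (a ^^^ b) + 1 := by
  simpa [Nat.bit_val] using Nat.xor_bit false a true b

lemma exists_two_mul_eq_two_pow_iff {x : ℕ} : (∃ i, 2 * x = 2 ^ i) ↔ ∃ i, x = 2 ^ i := by
  constructor
  · rintro ⟨_ | i, h⟩
    · omega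
    · exact ⟨i, by rw [pow_succ] at h; omega⟩
  · rintro ⟨i, rfl⟩
    exact ⟨i + 1, by ring⟩

lemma exists_two_mul_add_one_eq_two_pow_iff {x : ℕ} : (∃ i, 2 * x + 1 = 2 ^ i) ↔ x = 0 := by
  constructor
  · rintro ⟨_ | i, h⟩
    · omega
    · rw [pow_succ] at h; omega
  · rintro rfl
    exact ⟨0, rfl⟩

lemma cubeAdj_two_mul_two_mul {a b : ℕ} : CubeAdj (2 * a) (2 * b) ↔ CubeAdj a b := by
  rw [CubeAdj, two_mul_xor_two_mul, exists_two_mul_eq_two_pow_iff, CubeAdj]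

lemma cubeAdj_two_mul_add_one_two_mul_add_one {a b : ℕ} :
    CubeAdj (2 * a + 1) (2 * b + 1) ↔ CubeAdj a b := by
  rw [CubeAdj, two_mul_add_one_xor_two_mul_add_one, exists_two_mul_eq_two_pow_iff, CubeAdj]

lemma cubeAdj_two_mul_two_mul_add_one {a b : ℕ} : CubeAdj (2 * a) (2 * b + 1) ↔ a = b := by
  rw [CubeAdj, two_mul_xor_two_mul_add_one, exists_two_mul_add_one_eq_two_pow_iff,
    Nat.xor_eq_zero_iff]

lemma cubeAdj_two_mul_add_one_two_mul {a b : ℕ} : CubeAdj (2 * a + 1) (2 * b) ↔ a = b :=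
  ⟨fun h => (cubeAdj_two_mul_two_mul_add_one.mp h.symm).symm,
    fun h => (cubeAdj_two_mul_two_mul_add_one.mpr h.symm).symm⟩

noncomputable def cubeEdgePairs (S : Finset ℕ) : Finset (ℕ × ℕ) :=
  {p ∈ S ×ˢ S | p.1 < p.2 ∧ CubeAdj p.1 p.2}

@[simp]
lemma mem_cubeEdgePairs {S : Finset ℕ} {u v : ℕ} :
    (u, v) ∈ cubeEdgePairs S ↔ u ∈ S ∧ v ∈ S ∧ u < v ∧ CubeAdj u v := by
  simp [cubeEdgePairs, and_assoc]

noncomputable def evenHalf (S : Finset ℕ) : Finset ℕ :=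
  S.preimage (2 * ·) (mul_right_injective₀ two_ne_zero).injOn

noncomputable def oddHalf (S : Finset ℕ) : Finset ℕ :=
  S.preimage (2 * · + 1) ((add_left_injective 1).comp (mul_right_injective₀ two_ne_zero)).injOn

@[simp] lemma mem_evenHalf {S : Finset ℕ} {a : ℕ} : a ∈ evenHalf S ↔ 2 * a ∈ S := mem_preimage
@[simp] lemma mem_oddHalf {S : Finset ℕ} {a : ℕ} : a ∈ oddHalf S ↔ 2 * a + 1 ∈ S := mem_preimage

lemma cubeEdgePairs_eq_union (S : Finset ℕ) :
    cubeEdgePairs S =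
      ((cubeEdgePairs (evenHalf S)).image (Prod.map (2 * ·) (2 * ·)) ∪
        (cubeEdgePairs (oddHalf S)).image (Prod.map (2 * · + 1) (2 * · + 1))) ∪
        (evenHalf S ∩ oddHalf S).image (fun a => (2 * a, 2 * a + 1)) := by
  have hne : ∀ x y : ℕ, 2 * x + 1 ≠ 2 * y := by omega
  ext ⟨u, v⟩
  obtain ⟨a, rfl | rfl⟩ := Nat.even_or_odd' u <;> obtain ⟨b, rfl | rfl⟩ := Nat.even_or_odd' v
  all_goals simp [cubeAdj_two_mul_two_mul, cubeAdj_two_mul_add_one_two_mul_add_one,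
    cubeAdj_two_mul_two_mul_add_one, cubeAdj_two_mul_add_one_two_mul, hne, (hne _ _).symm]
  all_goals grind

lemma card_cubeEdgePairs_eq_halves (S : Finset ℕ) :
    #(cubeEdgePairs S) = #(cubeEdgePairs (evenHalf S)) + #(cubeEdgePairs (oddHalf S)) +
      #(evenHalf S ∩ oddHalf S) := by
  have hdouble : Function.Injective (2 * · : ℕ → ℕ) := mul_right_injective₀ two_ne_zero
  have hdouble_succ : Function.Injective (2 * · + 1 : ℕ → ℕ) :=
    (add_left_injective 1).comp hdouble
  rw [cubeEdgePairs_eq_union, card_union_of_disjoint, card_union_of_disjoint,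
    card_image_of_injective _ (hdouble.prodMap hdouble),
    card_image_of_injective _ (hdouble_succ.prodMap hdouble_succ),
    card_image_of_injective _ (fun a b h => hdouble (congrArg Prod.fst h))]
  · simp [disjoint_left]
    omega
  · simp [disjoint_left]
    omega

lemma card_evenHalf_add_card_oddHalf (S : Finset ℕ) : #(evenHalf S) + #(oddHalf S) = #S := by
  rw [evenHalf, oddHalf, card_preimage, card_preimage]
  rw [← card_filter_add_card_filter_not (s := S) (· ∈ Set.range (2 * · : ℕ → ℕ))]
  congr 2
  refine filter_congr fun v _ => ?_
  simp only [Set.mem_range]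
  constructor
  · rintro ⟨a, rfl⟩ ⟨b, h⟩
    omega
  · intro h
    exact ⟨v / 2, by_contra fun hv => h ⟨v / 2, by omega⟩⟩

lemma evenHalf_range (j : ℕ) : evenHalf (range j) = range ((j + 1) / 2) := by
  ext a
  simp only [mem_evenHalf, mem_range]
  omega

lemma oddHalf_range (j : ℕ) : oddHalf (range j) = range (j / 2) := by
  ext a
  simp only [mem_oddHalf, mem_range]
  omega

lemma evenHalf_subset_range {s : ℕ} {S : Finset ℕ} (hS : S ⊆ range (2 ^ (s + 1))) :
    evenHalf S ⊆ range (2 ^ s) := fun a ha => by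
  have := hS (mem_evenHalf.mp ha)
  simp only [mem_range, pow_succ] at this ⊢
  omega

lemma oddHalf_subset_range {s : ℕ} {S : Finset ℕ} (hS : S ⊆ range (2 ^ (s + 1))) :
    oddHalf S ⊆ range (2 ^ s) := fun a ha => by
  have := hS (mem_oddHalf.mp ha)
  simp only [mem_range, pow_succ] at this ⊢
  omega

lemma card_cubeEdgePairs_range (j : ℕ) :
    #(cubeEdgePairs (range j)) =
      #(cubeEdgePairs (range ((j + 1) / 2))) + #(cubeEdgePairs (range (j / 2))) + j / 2 := by
  rw [card_cubeEdgePairs_eq_halves, evenHalf_range, oddHalf_range,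
    inter_eq_right.mpr (range_subset_range.mpr (by omega)), card_range]

lemma add_add_min_le_of_halving {f : ℕ → ℕ} (h0 : f 0 = 0)
    (hf : ∀ n, f n = f ((n + 1) / 2) + f (n / 2) + n / 2) (a b : ℕ) :
    f a + f b + min a b ≤ f (a + b) := by
  induction hn : a + b using Nat.strong_induction_on generalizing a b with
  | _ n ih =>
    obtain rfl | ha := Nat.eq_zero_or_pos a
    · simp [h0, ← hn]
    obtain rfl | hb := Nat.eq_zero_or_pos b
    · simp [h0, ← hn]
    have h₁ := ih _ (by omega) ((a + 1) / 2) (b / 2) rfl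
    have h₂ := ih _ (by omega) (a / 2) ((b + 1) / 2) rfl
    have hfa := hf a
    have hfb := hf b
    have hfn := hf n
    obtain ⟨e₁, e₂⟩ | ⟨e₁, e₂⟩ : (a + 1) / 2 + b / 2 = (n + 1) / 2 ∧ a / 2 + (b + 1) / 2 = n / 2 ∨
        (a + 1) / 2 + b / 2 = n / 2 ∧ a / 2 + (b + 1) / 2 = (n + 1) / 2 := by omega
    all_goals
      rw [e₁] at h₁
      rw [e₂] at h₂
      omega

lemma cubeEdgePairs_eq_empty_of_subset_range_one {S : Finset ℕ} (hS : S ⊆ range 1) :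
    cubeEdgePairs S = ∅ := by
  refine filter_eq_empty_iff.mpr fun p hp hlt => ?_
  have h₁ := hS (mem_product.mp hp).1
  have h₂ := hS (mem_product.mp hp).2
  simp only [mem_range] at h₁ h₂
  omega

lemma card_cubeEdgePairs_le_range_of_subset (s : ℕ) {S : Finset ℕ} (hS : S ⊆ range (2 ^ s)) :
    #(cubeEdgePairs S) ≤ #(cubeEdgePairs (range #S)) := by
  induction s generalizing S with
  | zero => simp [cubeEdgePairs_eq_empty_of_subset_range_one hS]
  | succ s ih =>
    calc #(cubeEdgePairs S)
        = #(cubeEdgePairs (evenHalf S)) + #(cubeEdgePairs (oddHalf S)) +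
            #(evenHalf S ∩ oddHalf S) := card_cubeEdgePairs_eq_halves S
      _ ≤ #(cubeEdgePairs (range #(evenHalf S))) + #(cubeEdgePairs (range #(oddHalf S))) +
            min #(evenHalf S) #(oddHalf S) :=
          add_le_add (add_le_add (ih (evenHalf_subset_range hS)) (ih (oddHalf_subset_range hS)))
            (le_min (card_le_card inter_subset_left) (card_le_card inter_subset_right))
      _ ≤ #(cubeEdgePairs (range #S)) := by
          rw [← card_evenHalf_add_card_oddHalf S]
          exact add_add_min_le_of_halving (by simp [cubeEdgePairs]) card_cubeEdgePairs_range _ _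

lemma card_cubeEdgePairs_le_range (S : Finset ℕ) :
    #(cubeEdgePairs S) ≤ #(cubeEdgePairs (range #S)) :=
  card_cubeEdgePairs_le_range_of_subset (S.sup id) fun _ hv =>
    mem_range.mpr ((le_sup (f := id) hv).trans_lt (Nat.lt_two_pow_self))

lemma interiorCount_eq_card_lt_adj {V : Type*} [Fintype V] [LinearOrder V] (G : SimpleGraph V)
    (S : Finset V) : interiorCount G S = #{p ∈ S ×ˢ S | p.1 < p.2 ∧ G.Adj p.1 p.2} := by
  symm
  refine card_nbij (fun p => s(p.1, p.2)) ?_ ?_ ?_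
  · rintro ⟨u, v⟩ hp
    simp only [mem_coe, mem_filter, mem_product] at hp
    simp [hp.2.2, Sym2.mem_iff, or_imp, forall_and, hp.1.1, hp.1.2]
  · rintro ⟨u, v⟩ huv ⟨u', v'⟩ huv' h
    simp only [mem_coe, mem_filter, Sym2.eq_iff] at huv huv' h
    obtain ⟨rfl, rfl⟩ | ⟨rfl, rfl⟩ := h
    · rfl
    · exact absurd huv.2.1 huv'.2.1.not_gt
  · intro e he
    induction e using Sym2.ind with
    | _ u v =>
    simp only [mem_coe, mem_filter, SimpleGraph.mem_edgeFinset, SimpleGraph.mem_edgeSet,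
      Sym2.mem_iff, forall_eq_or_imp, forall_eq] at he
    obtain ⟨hadj, hu, hv⟩ := he
    obtain huv | hvu := lt_or_gt_of_ne hadj.ne
    · exact ⟨(u, v), by simp [hu, hv, huv, hadj], rfl⟩
    · exact ⟨(v, u), by simp [hu, hv, hvu, hadj.symm], Sym2.eq_swap⟩

lemma hypercubeGraph_adj_iff {s : ℕ} {u v : Fin (2 ^ s)} :
    (hypercubeGraph s).Adj u v ↔ CubeAdj u v := by
  simp only [hypercubeGraph, SimpleGraph.fromRel_adj, CubeAdj]
  constructor
  · rintro ⟨-, ⟨i, -, h⟩ | ⟨i, -, h⟩⟩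
    · exact ⟨i, h⟩
    · exact ⟨i, by rwa [Nat.xor_comm]⟩
  · rintro ⟨i, h⟩
    have hi : 2 ^ i < 2 ^ s := h ▸ Nat.xor_lt_two_pow u.isLt v.isLt
    refine ⟨fun huv => ?_, Or.inl ⟨i, (Nat.pow_lt_pow_iff_right one_lt_two).mp hi, h⟩⟩
    rw [huv, Nat.xor_self] at h
    exact (Nat.two_pow_pos i).ne h

lemma interiorCount_hypercubeGraph (s : ℕ) (S : Finset (Fin (2 ^ s))) :
    interiorCount (hypercubeGraph s) S = #(cubeEdgePairs (S.map Fin.valEmbedding)) := by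
  rw [interiorCount_eq_card_lt_adj, cubeEdgePairs]
  refine card_nbij (Prod.map Fin.val Fin.val) ?_
    (Fin.val_injective.prodMap Fin.val_injective).injOn ?_
  · rintro ⟨u, v⟩ huv
    simp only [mem_coe, mem_filter, mem_product, hypercubeGraph_adj_iff] at huv
    exact mem_filter.mpr ⟨mem_product.mpr ⟨mem_map_of_mem _ huv.1.1, mem_map_of_mem _ huv.1.2⟩,
      huv.2⟩
  · rintro ⟨u, v⟩ huv
    simp only [mem_coe, mem_filter, mem_product, mem_map, Fin.valEmbedding_apply] at huv
    obtain ⟨⟨⟨u, hu, rfl⟩, ⟨v, hv, rfl⟩⟩, huv, hadj⟩ := huv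
    exact ⟨(u, v), mem_filter.mpr ⟨mem_product.mpr ⟨hu, hv⟩, huv, hypercubeGraph_adj_iff.mpr hadj⟩,
      rfl⟩

theorem hypercube_initial_segment_optimal_general (s : ℕ)
    (j : ℕ) (hj₂ : j ≤ 2 ^ s)
    (S : Finset (Fin (2 ^ s))) (hS : S.card = j) :
    interiorCount (hypercubeGraph s) S ≤
      interiorCount (hypercubeGraph s)
        (Finset.univ.filter (fun v : Fin (2 ^ s) => v.val < j)) := by
  have hL : (univ.filter fun v : Fin (2 ^ s) => v.val < j).map Fin.valEmbedding = range j := by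
    ext v
    simp only [mem_map, mem_filter, mem_univ, true_and, Fin.valEmbedding_apply, mem_range]
    exact ⟨by rintro ⟨v, hv, rfl⟩; exact hv, fun hv => ⟨⟨v, hv.trans_le hj₂⟩, hv, rfl⟩⟩
  rw [interiorCount_hypercubeGraph, interiorCount_hypercubeGraph, hL, ← hS,
    ← card_map Fin.valEmbedding]
  exact card_cubeEdgePairs_le_range _

/-- In the hypercube `Q^s`, for `1 ≤ j ≤ 2^s`, the set `L_j = {0, 1, …, j − 1}`
is an optimal set on `j` vertices for the maximum subgraph problem. -/
theorem hypercube_initial_segment_optimal (s : ℕ) (hs : 1 ≤ s)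
    (j : ℕ) (hj₁ : 1 ≤ j) (hj₂ : j ≤ 2 ^ s)
    (S : Finset (Fin (2 ^ s))) (hS : S.card = j) :
    interiorCount (hypercubeGraph s) S ≤
      interiorCount (hypercubeGraph s)
        (Finset.univ.filter (fun v : Fin (2 ^ s) => v.val < j)) :=
  hypercube_initial_segment_optimal_general s j hj₂ S hS
end

section
/- Let s ≥ 2 and let FQ^s be the s-dimensional folded hypercube. Then θ_{FQ^s}(2^{s−1}) = 2^s; that is, the minimum, over all subsets S of V(FQ^s) with |S| = 2^{s−1}, of the number of edges of FQ^s with exactly one endpoint in S, equals 2^s. -/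
open scoped Classical

/-- The `s`-dimensional folded hypercube `FQ^s`, with vertices identified with
the integers `0, 1, …, 2^s − 1` via binary representation: two vertices are
adjacent iff they differ in exactly one coordinate (bitwise xor a power of two
`2^i`, `i < s`) or in all `s` coordinates (bitwise xor equal to `2^s − 1`). -/
def foldedHypercube (s : ℕ) : SimpleGraph (Fin (2 ^ s)) :=
  SimpleGraph.fromRel
    (fun u v => (∃ i < s, u.val ^^^ v.val = 2 ^ i) ∨ u.val ^^^ v.val = 2 ^ s - 1)

/-!
`FQ^s` is the Cayley graph of `(ℤ/2)^s` with connection set `{e_0, …, e_{s-1}, 𝟙}`, so its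
eigenvalues are the character sums `∑_d χ_a(d) = s - 2k + (-1)^k`, `k` the weight of `a`; for
`a ≠ 0` they are at most `s - 3`. If `#S = 2^(s-1)`, the `±1` indicator `f` of `S` has mean
zero, hence `∑_{x ~ y} f(x) f(y) ≤ (s - 3) 2^s`. The left side equals `(s + 1) 2^s - 4 |∂S|`,
so `|∂S| ≥ 2^s`. The half-cube `{x | x_{s-1} = 0}` attains the bound: its indicator is the
character `χ_{2^(s-1)}`, of weight `k = 1`.
-/

open Finset

namespace Nat

theorem exists_lt_testBit_of_ne_zero {s a : ℕ} (ha : a < 2 ^ s) (h0 : a ≠ 0) :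
    ∃ i < s, a.testBit i := by
  obtain ⟨i, hi⟩ := exists_testBit_of_ne_zero h0
  refine ⟨i, ?_, hi⟩
  by_contra! hsi
  rw [testBit_lt_two_pow (ha.trans_le (Nat.pow_le_pow_right two_pos hsi))] at hi
  exact Bool.false_ne_true hi

theorem sum_range_two_pow_xor {M : Type*} [AddCommMonoid M] {s t : ℕ} (ht : t < 2 ^ s)
    (g : ℕ → M) : ∑ u ∈ range (2 ^ s), g (u ^^^ t) = ∑ u ∈ range (2 ^ s), g u :=
  sum_nbij' (· ^^^ t) (· ^^^ t)
    (fun u hu => mem_range.2 (xor_lt_two_pow (mem_range.1 hu) ht))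
    (fun u hu => mem_range.2 (xor_lt_two_pow (mem_range.1 hu) ht))
    (fun u _ => by simp) (fun u _ => by simp) fun _ _ => rfl

end Nat

/-- The characters `χ_a(u) = (-1)^{#(a ∧ u)}` of `(ℤ/2)^s`, whose elements are encoded as
`s`-bit naturals with group law `^^^`. -/
def walsh (s a u : ℕ) : ℤ :=
  ∏ i ∈ range s, if a.testBit i && u.testBit i then -1 else 1

section Walsh

variable {s : ℕ}

theorem walsh_comm (a u : ℕ) : walsh s a u = walsh s u a := by
  simp only [walsh, Bool.and_comm]

theorem walsh_xor_right (a u v : ℕ) : walsh s a (u ^^^ v) = walsh s a u * walsh s a v := by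
  rw [walsh, walsh, walsh, ← prod_mul_distrib]
  refine prod_congr rfl fun i _ => ?_
  rw [Nat.testBit_xor]
  cases a.testBit i <;> cases u.testBit i <;> cases v.testBit i <;> simp

@[simp] theorem walsh_zero_right (a : ℕ) : walsh s a 0 = 1 := by simp [walsh]

@[simp] theorem walsh_zero_left (u : ℕ) : walsh s 0 u = 1 := by simp [walsh]

theorem walsh_mul_self (a u : ℕ) : walsh s a u * walsh s a u = 1 := by
  rw [← walsh_xor_right, Nat.xor_self, walsh_zero_right]

theorem walsh_two_pow_right (a : ℕ) {i : ℕ} (hi : i < s) :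
    walsh s a (2 ^ i) = if a.testBit i then -1 else 1 := by
  rw [walsh, prod_eq_single_of_mem i (mem_range.2 hi)]
  · simp
  · intro j _ hji
    simp [Ne.symm hji]

theorem walsh_two_pow_sub_one_right (a : ℕ) :
    walsh s a (2 ^ s - 1) = (-1) ^ #{i ∈ range s | a.testBit i} := by
  rw [walsh, ← prod_filter_mul_prod_filter_not (range s) (fun i => a.testBit i)]
  rw [prod_congr rfl fun i hi => if_pos ?_, prod_congr rfl fun i hi => if_neg ?_]
  · simp
  all_goals
    simp only [mem_filter, mem_range] at hi
    simp [hi.1, hi.2]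

theorem sum_walsh_right {a : ℕ} (ha : a < 2 ^ s) :
    ∑ u ∈ range (2 ^ s), walsh s a u = if a = 0 then 2 ^ s else 0 := by
  split_ifs with h0
  · simp [h0]
  obtain ⟨i, hi, hai⟩ := Nat.exists_lt_testBit_of_ne_zero ha h0
  -- translating by `2^i` flips the sign of `χ_a`
  have hflip := Nat.sum_range_two_pow_xor (Nat.pow_lt_pow_right one_lt_two hi) (walsh s a)
  simp only [walsh_xor_right, walsh_two_pow_right a hi, hai, if_true, mul_neg_one,
    sum_neg_distrib] at hflip
  omega

def walshTransform (s : ℕ) (f : ℕ → ℤ) (a : ℕ) : ℤ :=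
  ∑ u ∈ range (2 ^ s), f u * walsh s a u

theorem walshTransform_zero (f : ℕ → ℤ) :
    walshTransform s f 0 = ∑ u ∈ range (2 ^ s), f u := by
  simp [walshTransform]

/-- The Wiener–Khinchin identity on `(ℤ/2)^s`. -/
theorem sum_walshTransform_sq_mul_walsh (f : ℕ → ℤ) {t : ℕ} (ht : t < 2 ^ s) :
    ∑ a ∈ range (2 ^ s), walshTransform s f a ^ 2 * walsh s a t
      = 2 ^ s * ∑ u ∈ range (2 ^ s), f u * f (u ^^^ t) := by
  have horth : ∀ u ∈ range (2 ^ s), ∀ v ∈ range (2 ^ s),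
      ∑ a ∈ range (2 ^ s), walsh s a (u ^^^ v ^^^ t) = if v = u ^^^ t then 2 ^ s else 0 := by
    intro u hu v hv
    simp only [walsh_comm _ (u ^^^ v ^^^ t)]
    rw [sum_walsh_right (Nat.xor_lt_two_pow (Nat.xor_lt_two_pow (mem_range.1 hu)
      (mem_range.1 hv)) ht)]
    refine if_congr ?_ rfl rfl
    rw [xor_eq_zero_iff, ← Nat.xor_right_inj (x := u), Nat.xor_xor_cancel_left]
  calc ∑ a ∈ range (2 ^ s), walshTransform s f a ^ 2 * walsh s a t
      = ∑ u ∈ range (2 ^ s), ∑ v ∈ range (2 ^ s),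
          f u * f v * ∑ a ∈ range (2 ^ s), walsh s a (u ^^^ v ^^^ t) := by
        simp only [walshTransform, sq, sum_mul, mul_sum, walsh_xor_right]
        rw [sum_comm]
        refine sum_congr rfl fun u _ => ?_
        rw [sum_comm]
        refine sum_congr rfl fun v _ => sum_congr rfl fun a _ => by ring
    _ = 2 ^ s * ∑ u ∈ range (2 ^ s), f u * f (u ^^^ t) := by
        rw [mul_sum]
        refine sum_congr rfl fun u hu => ?_
        rw [sum_congr rfl fun v hv => by rw [horth u hu v hv]]
        simp [mem_range.2 (Nat.xor_lt_two_pow (mem_range.1 hu) ht), mul_comm]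

theorem sum_walshTransform_sq (f : ℕ → ℤ) :
    ∑ a ∈ range (2 ^ s), walshTransform s f a ^ 2
      = 2 ^ s * ∑ u ∈ range (2 ^ s), f u ^ 2 := by
  simpa [sq] using sum_walshTransform_sq_mul_walsh f (t := 0) (by positivity)

/-- The eigenvalues of the Cayley graph of `(ℤ/2)^s` with connection set `D` are the sums
`∑_{d ∈ D} χ_a(d)`; on functions of mean zero only those with `a ≠ 0` contribute. -/
theorem sum_sum_mul_xor_le (D : Finset ℕ) (hD : ∀ d ∈ D, d < 2 ^ s) (μ : ℤ)
    (hμ : ∀ a, 0 < a → a < 2 ^ s → ∑ d ∈ D, walsh s a d ≤ μ) (f : ℕ → ℤ)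
    (hf : ∑ u ∈ range (2 ^ s), f u = 0) :
    ∑ d ∈ D, ∑ u ∈ range (2 ^ s), f u * f (u ^^^ d)
      ≤ μ * ∑ u ∈ range (2 ^ s), f u ^ 2 := by
  have hspec : 2 ^ s * ∑ d ∈ D, ∑ u ∈ range (2 ^ s), f u * f (u ^^^ d)
      = ∑ a ∈ range (2 ^ s), walshTransform s f a ^ 2 * ∑ d ∈ D, walsh s a d := by
    rw [mul_sum, sum_congr rfl fun d hd => (sum_walshTransform_sq_mul_walsh f (hD d hd)).symm,
      sum_comm]
    simp only [mul_sum]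
  have hle : ∑ a ∈ range (2 ^ s), walshTransform s f a ^ 2 * ∑ d ∈ D, walsh s a d
      ≤ ∑ a ∈ range (2 ^ s), walshTransform s f a ^ 2 * μ := by
    refine sum_le_sum fun a ha => ?_
    rcases Nat.eq_zero_or_pos a with rfl | hpos
    · simp [walshTransform_zero, hf]
    · exact mul_le_mul_of_nonneg_left (hμ a hpos (mem_range.1 ha)) (sq_nonneg _)
  rw [← sum_mul, sum_walshTransform_sq, ← hspec] at hle
  have : (0 : ℤ) < 2 ^ s := by positivity
  nlinarith

end Walsh

def signIndicator {α : Type*} [DecidableEq α] (S : Finset α) (x : α) : ℤ :=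
  if x ∈ S then 1 else -1

theorem signIndicator_mul_self {α : Type*} [DecidableEq α] (S : Finset α) (x : α) :
    signIndicator S x * signIndicator S x = 1 := by
  unfold signIndicator; split_ifs <;> norm_num

theorem sum_signIndicator {α : Type*} [Fintype α] [DecidableEq α] (S : Finset α) :
    ∑ x, signIndicator S x = 2 * #S - Fintype.card α := by
  unfold signIndicator
  rw [sum_ite, sum_const, sum_const, filter_mem_eq_inter, univ_inter,
    filter_notMem_eq_sdiff, ← compl_eq_univ_sdiff, card_compl, nsmul_eq_mul, nsmul_eq_mul,
    Nat.cast_sub (card_le_univ S)]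
  ring

theorem signIndicator_map_val {n : ℕ} (S : Finset (Fin n)) (x : Fin n) :
    signIndicator (S.map Fin.valEmbedding) x.val = signIndicator S x := by
  simp [signIndicator, Fin.val_inj]

section Boundary

variable {V : Type*} [Fintype V] [DecidableEq V] (G : SimpleGraph V) [DecidableRel G.Adj]
  (S : Finset V)

theorem boundaryCount_eq_card_interedges : boundaryCount G S = #(G.interedges S Sᶜ) := by
  symm
  refine card_bij (fun p _ => s(p.1, p.2)) ?_ ?_ ?_
  · rintro ⟨x, y⟩ h
    rw [SimpleGraph.mk_mem_interedges_iff, mem_compl] at h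
    simp only [mem_filter, SimpleGraph.mem_edgeFinset, SimpleGraph.mem_edgeSet]
    exact ⟨h.2.2, x, y, rfl, h.1, h.2.1⟩
  · rintro ⟨x, y⟩ h ⟨x', y'⟩ h' he
    rw [SimpleGraph.mk_mem_interedges_iff, mem_compl] at h h'
    rcases Sym2.eq_iff.1 he with ⟨rfl, rfl⟩ | ⟨rfl, rfl⟩
    · rfl
    · exact absurd h.1 h'.2.1
  · intro e he
    simp only [mem_filter, SimpleGraph.mem_edgeFinset] at he
    obtain ⟨he, x, y, rfl, hx, hy⟩ := he
    exact ⟨(x, y), by simpa [SimpleGraph.mk_mem_interedges_iff, hx, hy] using he, rfl⟩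

theorem card_interedges_eq_sum (A B : Finset V) :
    (#(G.interedges A B) : ℤ)
      = ∑ x, ∑ y ∈ G.neighborFinset x, if x ∈ A ∧ y ∈ B then 1 else 0 := by
  have : G.interedges A B
      = univ.filter fun p : V × V => G.Adj p.1 p.2 ∧ p.1 ∈ A ∧ p.2 ∈ B := by
    ext ⟨x, y⟩
    simp [SimpleGraph.mk_mem_interedges_iff, and_comm, and_assoc]
  rw [this, card_filter, ← univ_product_univ, sum_product]
  push_cast
  simp only [SimpleGraph.neighborFinset_eq_filter, sum_filter, ite_and]

theorem sum_neighborFinset_signIndicator_mul :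
    ∑ x, ∑ y ∈ G.neighborFinset x, signIndicator S x * signIndicator S y
      = ∑ x, (G.degree x : ℤ) - 4 * boundaryCount G S := by
  have hpt : ∀ x y, signIndicator S x * signIndicator S y
      = 1 - 2 * ((if x ∈ S ∧ y ∈ Sᶜ then 1 else 0)
          + if x ∈ Sᶜ ∧ y ∈ S then 1 else 0) := by
    intro x y
    unfold signIndicator
    by_cases hx : x ∈ S <;> by_cases hy : y ∈ S <;> simp [hx, hy]
  simp only [hpt, sum_sub_distrib, ← mul_sum, sum_add_distrib, ← card_interedges_eq_sum,
    boundaryCount_eq_card_interedges, SimpleGraph.interedges,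
    @Rel.card_interedges_comm _ G.Adj _ ⟨fun _ _ h => h.symm⟩ Sᶜ S]
  simp only [sum_const, SimpleGraph.card_neighborFinset_eq_degree, nsmul_eq_mul, mul_one]
  ring

end Boundary

namespace FoldedHypercube

/-- `FQ^s` is the Cayley graph of `(ℤ/2)^s` with the unit vectors and the all-ones vector as
connection set. -/
def generators (s : ℕ) : Finset ℕ := insert (2 ^ s - 1) ((range s).image (2 ^ ·))

variable {s : ℕ}

theorem mem_generators {d : ℕ} :
    d ∈ generators s ↔ (∃ i < s, d = 2 ^ i) ∨ d = 2 ^ s - 1 := by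
  simp [generators, eq_comm, or_comm]

theorem lt_of_mem_generators {d : ℕ} (hd : d ∈ generators s) : d < 2 ^ s := by
  rcases mem_generators.1 hd with ⟨i, hi, rfl⟩ | rfl
  · exact Nat.pow_lt_pow_right one_lt_two hi
  · exact Nat.sub_lt (by positivity) one_pos

theorem ne_zero_of_mem_generators (hs : 1 ≤ s) {d : ℕ} (hd : d ∈ generators s) : d ≠ 0 := by
  have : 2 ≤ 2 ^ s := by simpa using Nat.pow_le_pow_right two_pos hs
  rcases mem_generators.1 hd with ⟨i, -, rfl⟩ | rfl
  · positivity
  · omega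

theorem two_pow_sub_one_notMem_image (hs : 2 ≤ s) : 2 ^ s - 1 ∉ (range s).image (2 ^ ·) := by
  simp only [mem_image, not_exists, not_and]
  intro i _ h
  -- `2 ^ s - 1` has both bits `0` and `1` set
  have := congrArg (Nat.testBit · (if i = 0 then 1 else 0)) h
  split_ifs at this <;> simp [Nat.testBit_two_pow] at this <;> omega

theorem card_generators (hs : 2 ≤ s) : #(generators s) = s + 1 := by
  rw [generators, card_insert_of_notMem (two_pow_sub_one_notMem_image hs),
    card_image_of_injective _ (Nat.pow_right_injective le_rfl), card_range]

theorem sum_walsh_generators (hs : 2 ≤ s) (a : ℕ) :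
    ∑ d ∈ generators s, walsh s a d
      = s - 2 * #{i ∈ range s | a.testBit i} + (-1) ^ #{i ∈ range s | a.testBit i} := by
  rw [generators, sum_insert (two_pow_sub_one_notMem_image hs), walsh_two_pow_sub_one_right,
    sum_image fun i _ j _ h => Nat.pow_right_injective le_rfl h,
    sum_congr rfl fun i hi => walsh_two_pow_right a (mem_range.1 hi), sum_ite]
  have := card_filter_add_card_filter_not (s := range s) (fun i => a.testBit i)
  rw [card_range] at this
  simp only [sum_const, nsmul_eq_mul, mul_neg_one, mul_one]
  omega

theorem sum_walsh_generators_le (hs : 2 ≤ s) {a : ℕ} (ha0 : 0 < a) (ha : a < 2 ^ s) :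
    ∑ d ∈ generators s, walsh s a d ≤ s - 3 := by
  rw [sum_walsh_generators hs]
  obtain ⟨i, hi, hai⟩ := Nat.exists_lt_testBit_of_ne_zero ha ha0.ne'
  have hk : 1 ≤ #{i ∈ range s | a.testBit i} := card_pos.2 ⟨i, by simp [hi, hai]⟩
  rcases hk.eq_or_lt with hk | hk
  · rw [← hk, pow_one]
    omega
  · rcases neg_one_pow_eq_or ℤ #{i ∈ range s | a.testBit i} with h | h <;> rw [h] <;> omega

theorem adj_iff (hs : 1 ≤ s) {x y : Fin (2 ^ s)} :
    (foldedHypercube s).Adj x y ↔ x.val ^^^ y.val ∈ generators s := by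
  rw [foldedHypercube, SimpleGraph.fromRel_adj, Nat.xor_comm y.val, or_self, mem_generators]
  refine ⟨And.right, fun h => ⟨fun hxy => ?_, h⟩⟩
  refine ne_zero_of_mem_generators hs (mem_generators.2 h) ?_
  rw [hxy, Nat.xor_self]

theorem image_val_neighborFinset (hs : 1 ≤ s) (x : Fin (2 ^ s)) :
    ((foldedHypercube s).neighborFinset x).image Fin.val
      = (generators s).image (x.val ^^^ ·) := by
  ext v
  simp only [mem_image, SimpleGraph.mem_neighborFinset, adj_iff hs]
  constructor
  · rintro ⟨y, hy, rfl⟩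
    exact ⟨_, hy, Nat.xor_xor_cancel_left _ _⟩
  · rintro ⟨d, hd, rfl⟩
    refine ⟨⟨x.val ^^^ d, Nat.xor_lt_two_pow x.isLt (lt_of_mem_generators hd)⟩, ?_, rfl⟩
    rwa [Nat.xor_xor_cancel_left]

theorem sum_neighborFinset {M : Type*} [AddCommMonoid M] (hs : 1 ≤ s) (x : Fin (2 ^ s))
    (g : ℕ → M) :
    ∑ y ∈ (foldedHypercube s).neighborFinset x, g y.val
      = ∑ d ∈ generators s, g (x.val ^^^ d) := by
  rw [← sum_image (f := g) fun y _ z _ h => Fin.ext h, image_val_neighborFinset hs,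
    sum_image fun d _ e _ h => Nat.xor_right_inj.1 h]

theorem degree_eq (hs : 2 ≤ s) (x : Fin (2 ^ s)) : (foldedHypercube s).degree x = s + 1 := by
  rw [← SimpleGraph.card_neighborFinset_eq_degree,
    ← card_image_of_injective _ Fin.val_injective, image_val_neighborFinset (by omega),
    card_image_of_injective _ fun _ _ h => Nat.xor_right_inj.1 h, card_generators hs]

theorem four_mul_boundaryCount (hs : 2 ≤ s) (S : Finset (Fin (2 ^ s))) :
    (4 * boundaryCount (foldedHypercube s) S : ℤ) = (s + 1) * 2 ^ s
      - ∑ d ∈ generators s, ∑ u ∈ range (2 ^ s),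
          signIndicator (S.map Fin.valEmbedding) u
            * signIndicator (S.map Fin.valEmbedding) (u ^^^ d) := by
  set σ := signIndicator (S.map Fin.valEmbedding)
  have hcayley : ∑ d ∈ generators s, ∑ u ∈ range (2 ^ s), σ u * σ (u ^^^ d)
      = ∑ x, ∑ y ∈ (foldedHypercube s).neighborFinset x,
          signIndicator S x * signIndicator S y := by
    rw [sum_comm, ← Fin.sum_univ_eq_sum_range]
    refine sum_congr rfl fun x _ => ?_
    rw [← sum_neighborFinset (by omega) x fun v => σ x.val * σ v]
    simp only [σ, signIndicator_map_val]
  rw [hcayley, sum_neighborFinset_signIndicator_mul]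
  simp only [degree_eq hs, sum_const, card_univ, Fintype.card_fin, nsmul_eq_mul]
  push_cast
  ring

theorem two_pow_le_boundaryCount (hs : 2 ≤ s) (S : Finset (Fin (2 ^ s)))
    (hS : #S = 2 ^ (s - 1)) : 2 ^ s ≤ boundaryCount (foldedHypercube s) S := by
  set σ := signIndicator (S.map Fin.valEmbedding)
  have hmean : ∑ u ∈ range (2 ^ s), σ u = 0 := by
    rw [← Fin.sum_univ_eq_sum_range]
    simp only [σ, signIndicator_map_val, sum_signIndicator, hS, Fintype.card_fin]
    push_cast
    rw [mul_pow_sub_one (by omega), sub_self]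
  have hnorm : ∑ u ∈ range (2 ^ s), σ u ^ 2 = 2 ^ s := by
    simp [sq, σ, signIndicator_mul_self]
  have hspec := sum_sum_mul_xor_le (generators s) (fun _ => lt_of_mem_generators) (s - 3)
    (fun _ ha0 ha => sum_walsh_generators_le hs ha0 ha) σ hmean
  have h4 := four_mul_boundaryCount hs S
  rw [hnorm] at hspec
  have : (2 ^ s : ℤ) ≤ boundaryCount (foldedHypercube s) S := by linarith
  exact_mod_cast this

def lowerHalf (s : ℕ) : Finset (Fin (2 ^ s)) := {x | x.val < 2 ^ (s - 1)}

theorem card_lowerHalf (hs : 1 ≤ s) : #(lowerHalf s) = 2 ^ (s - 1) := by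
  rw [lowerHalf, Fin.card_filter_val_lt, min_eq_right (Nat.pow_le_pow_right two_pos (by omega))]

theorem signIndicator_lowerHalf (hs : 1 ≤ s) {u : ℕ} (hu : u < 2 ^ s) :
    signIndicator ((lowerHalf s).map Fin.valEmbedding) u = walsh s (2 ^ (s - 1)) u := by
  rw [show u = (⟨u, hu⟩ : Fin (2 ^ s)).val from rfl, signIndicator_map_val, walsh_comm,
    walsh_two_pow_right _ (by omega), signIndicator]
  simp only [lowerHalf, mem_filter, mem_univ, true_and]
  by_cases h : u < 2 ^ (s - 1)
  · simp [h, Nat.testBit_lt_two_pow h]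
  · have := Nat.testBit_of_two_pow_le_and_two_pow_add_one_gt (not_lt.1 h)
      (by rwa [Nat.sub_add_cancel hs])
    simp [h, this]

theorem boundaryCount_lowerHalf (hs : 2 ≤ s) :
    boundaryCount (foldedHypercube s) (lowerHalf s) = 2 ^ s := by
  have hbits : #{i ∈ range s | (2 ^ (s - 1)).testBit i} = 1 := by
    simp [Nat.testBit_two_pow, filter_eq, show s - 1 < s by omega]
  have hsum : ∑ d ∈ generators s, ∑ u ∈ range (2 ^ s),
      signIndicator ((lowerHalf s).map Fin.valEmbedding) u
        * signIndicator ((lowerHalf s).map Fin.valEmbedding) (u ^^^ d) = 2 ^ s * (s - 3) := by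
    calc _ = ∑ d ∈ generators s, ∑ u ∈ range (2 ^ s), walsh s (2 ^ (s - 1)) d := by
          refine sum_congr rfl fun d hd => sum_congr rfl fun u hu => ?_
          have hu' := mem_range.1 hu
          rw [signIndicator_lowerHalf (by omega) hu', signIndicator_lowerHalf (by omega)
            (Nat.xor_lt_two_pow hu' (lt_of_mem_generators hd)), walsh_xor_right, ← mul_assoc,
            walsh_mul_self, one_mul]
      _ = 2 ^ s * (s - 3) := by
          simp only [sum_const, card_range, nsmul_eq_mul, ← mul_sum, sum_walsh_generators hs,
            hbits]
          push_cast
          ring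
  have h4 := four_mul_boundaryCount hs (lowerHalf s)
  rw [hsum] at h4
  have : (boundaryCount (foldedHypercube s) (lowerHalf s) : ℤ) = 2 ^ s := by linarith
  exact_mod_cast this

end FoldedHypercube

/-- For `s ≥ 2`, `θ_{FQ^s}(2^{s−1}) = 2^s`. -/
theorem foldedHypercube_minCut_half (s : ℕ) (hs : 2 ≤ s) :
    minCut (foldedHypercube s) (2 ^ (s - 1)) = 2 ^ s := by
  have hcard := FoldedHypercube.card_lowerHalf (by omega : 1 ≤ s)
  refine le_antisymm
    (Nat.sInf_le ⟨_, hcard, (FoldedHypercube.boundaryCount_lowerHalf hs).symm⟩) ?_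
  refine le_csInf ⟨_, _, hcard, rfl⟩ ?_
  rintro _ ⟨S, hS, rfl⟩
  exact FoldedHypercube.two_pow_le_boundaryCount hs S hS
end

section
/- Let n ≥ 3 and 1 ≤ j < ⌊n/2⌋, and let A = G(n; ±{1, …, j}) be the circulant graph. For every l with 1 ≤ l ≤ n and every a, the set of l consecutive vertices {a, a+1, …, a+l−1} (taken modulo n) induces a maximum subgraph of A on l vertices; that is, for every subset S of V(A) with |S| = l, the number of edges of A with both endpoints in S is at most the number of edges of A with both endpoints in {a, a+1, …, a+l−1}. -/
open scoped Classical

/-- The circulant graph `G(n; ±{1, …, j})` on the vertex set `ZMod n`: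
`u` and `v` are adjacent iff `u − v ≡ ±t (mod n)` for some `1 ≤ t ≤ j`. -/
def circulantGraph (n j : ℕ) : SimpleGraph (ZMod n) :=
  SimpleGraph.fromRel (fun u v => ∃ t : ℕ, 1 ≤ t ∧ t ≤ j ∧ u - v = (t : ZMod n))

/-!
Write `∂ₜ S = #{u ∈ S | u + t ∉ S}` (`S.shiftBoundary t`). When `2 * j < n`, every edge of
`G(n; ±{1, …, j})` inside `S` is `s(u, u + t)` for a unique `u ∈ S` and `1 ≤ t ≤ j`, so the number
of such edges is `j * #S - ∑_{t = 1}^{j} ∂ₜ S`, and it suffices to show that intervals minimise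
this boundary sum.
For an interval, `∂ₜ I ≤ min t m` with `m = min l (n - l)`. For an arbitrary `S` of size `l`, the
function `t ↦ ∂ₜ S` on `ZMod n` vanishes at `0`, is even, subadditive and bounded by `m`, and has
total sum `l * (n - l) = m * (n - m)`. These properties alone give
`∑_{t = 1}^{J} min t m ≤ ∑_{t = 1}^{J} ∂ₜ S` whenever `2 * J < n`: for `J + 1 ≥ m` bound the shifts
strictly between `J` and `n - J` by `m` in the total sum, and for smaller `J` argue by downward
induction, using `J * ∂_{J+1} S ≤ 2 * ∑_{t = 1}^{J} ∂ₜ S`.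
-/

open Finset

namespace Finset

variable {G : Type*} [AddGroup G]

noncomputable def shiftOverlap (S : Finset G) (t : G) : ℕ := #{u ∈ S | u + t ∈ S}

noncomputable def shiftBoundary (S : Finset G) (t : G) : ℕ := #{u ∈ S | u + t ∉ S}

theorem shiftOverlap_add_shiftBoundary (S : Finset G) (t : G) :
    S.shiftOverlap t + S.shiftBoundary t = #S :=
  card_filter_add_card_filter_not _

theorem shiftBoundary_zero (S : Finset G) : S.shiftBoundary 0 = 0 := by
  simp [shiftBoundary]

theorem shiftOverlap_neg (S : Finset G) (t : G) : S.shiftOverlap (-t) = S.shiftOverlap t := by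
  refine card_nbij' (· + -t) (· + t) ?_ ?_ (fun u _ => neg_add_cancel_right u t)
    (fun u _ => add_neg_cancel_right u t) <;>
  · intro u hu
    rw [mem_coe, mem_filter] at hu ⊢
    simpa using hu.symm

theorem shiftBoundary_neg (S : Finset G) (t : G) : S.shiftBoundary (-t) = S.shiftBoundary t := by
  have h₁ := S.shiftOverlap_add_shiftBoundary t
  have h₂ := S.shiftOverlap_add_shiftBoundary (-t)
  rw [shiftOverlap_neg] at h₂
  omega

/-- A point leaving `S` under the shift by `s + t` either leaves it under `s` already, or its
`s`-shift stays in `S` and then leaves it under `t`. -/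
theorem shiftBoundary_add_le (S : Finset G) (s t : G) :
    S.shiftBoundary (s + t) ≤ S.shiftBoundary s + S.shiftBoundary t := by
  have hsub : {u ∈ S | u + (s + t) ∉ S} ⊆
      {u ∈ S | u + s ∉ S} ∪ {v ∈ S | v + t ∉ S}.image (· + -s) := by
    intro u hu
    rw [mem_filter] at hu
    by_cases hus : u + s ∈ S
    · refine mem_union_right _ (mem_image.mpr ⟨u + s, ?_, add_neg_cancel_right u s⟩)
      rw [mem_filter, add_assoc]
      exact ⟨hus, hu.2⟩
    · exact mem_union_left _ (mem_filter.mpr ⟨hu.1, hus⟩)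
  calc S.shiftBoundary (s + t) ≤ #({u ∈ S | u + s ∉ S} ∪ {v ∈ S | v + t ∉ S}.image (· + -s)) :=
        card_le_card hsub
    _ ≤ S.shiftBoundary s + S.shiftBoundary t :=
        (card_union_le _ _).trans (Nat.add_le_add_left card_image_le _)

theorem shiftBoundary_le_card (S : Finset G) (t : G) : S.shiftBoundary t ≤ #S :=
  card_filter_le _ _

variable [Fintype G]

theorem shiftBoundary_le_card_compl (S : Finset G) (t : G) : S.shiftBoundary t ≤ #Sᶜ :=
  card_le_card_of_injOn (· + t) (fun u hu => by simpa using (mem_filter.mp hu).2)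
    (add_left_injective t).injOn

theorem sum_shiftOverlap (S : Finset G) : ∑ t, S.shiftOverlap t = #S * #S := by
  have hfiber : ∀ u : G, #{t | u + t ∈ S} = #S := fun u =>
    card_nbij' (u + ·) (-u + ·) (fun t ht => by simpa using ht) (fun v hv => by simpa using hv)
      (fun t _ => neg_add_cancel_left u t) (fun v _ => add_neg_cancel_left u v)
  simp only [shiftOverlap, card_filter]
  rw [sum_comm]
  simp [hfiber]

theorem sum_shiftBoundary (S : Finset G) :
    ∑ t, S.shiftBoundary t = #S * (Fintype.card G - #S) := by
  have h : ∑ t, (S.shiftOverlap t + S.shiftBoundary t) = Fintype.card G * #S := by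
    simp [shiftOverlap_add_shiftBoundary]
  rw [sum_add_distrib, sum_shiftOverlap] at h
  rw [Nat.mul_sub, Nat.mul_comm]
  omega

theorem shiftBoundary_image_range_le {R : Type*} [AddGroupWithOne R] [DecidableEq R] (a : R)
    (l t : ℕ) :
    ((range l).image fun i : ℕ => a + (i : R)).shiftBoundary t ≤ t := by
  set I := (range l).image fun i : ℕ => a + (i : R)
  calc I.shiftBoundary t ≤ #((Ico (l - t) l).image fun i : ℕ => a + (i : R)) :=
        card_le_card fun u hu => by
          obtain ⟨hu, hout⟩ : u ∈ I ∧ u + (t : R) ∉ I := by simpa only [mem_filter] using hu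
          obtain ⟨i, hi, rfl⟩ := mem_image.mp hu
          refine mem_image.mpr ⟨i, mem_Ico.mpr ⟨?_, mem_range.mp hi⟩, rfl⟩
          by_contra hit
          exact hout (mem_image.mpr
            ⟨i + t, mem_range.mpr (by omega), by rw [Nat.cast_add, add_assoc]⟩)
    _ ≤ t := card_image_le.trans (by rw [Nat.card_Ico]; omega)

end Finset

theorem two_mul_sum_range_min_of_succ_le {m J : ℕ} (h : J + 1 ≤ m) :
    2 * ∑ t ∈ range J, min (t + 1) m = J * (J + 1) := by
  induction J with
  | zero => simp
  | succ J ih =>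
    rw [sum_range_succ, mul_add, ih (by omega), min_eq_left (by omega)]
    ring

theorem two_mul_sum_range_min_of_le_succ {m J : ℕ} (h : m ≤ J + 1) :
    2 * ∑ t ∈ range J, min (t + 1) m = m * (2 * J + 1 - m) := by
  rcases Nat.eq_zero_or_pos m with rfl | hm
  · simp
  have h' : m - 1 ≤ J := by omega
  induction J, h' using Nat.le_induction with
  | base =>
    rw [two_mul_sum_range_min_of_succ_le (by omega), Nat.sub_add_cancel hm,
      show 2 * (m - 1) + 1 - m = m - 1 by omega, mul_comm]
  | succ J hJ ih =>
    rw [sum_range_succ, mul_add, ih (by omega), min_eq_right (by omega),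
      show 2 * (J + 1) + 1 - m = (2 * J + 1 - m) + 2 by omega]
    ring

namespace ZMod

variable {n : ℕ}

theorem natCast_ne_zero_of_pos_of_lt {k : ℕ} (h₀ : 0 < k) (h : k < n) : (k : ZMod n) ≠ 0 :=
  fun hk => absurd (Nat.le_of_dvd h₀ ((natCast_eq_zero_iff k n).mp hk)) (by omega)

theorem natCast_injOn_range : Set.InjOn (Nat.cast : ℕ → ZMod n) (range n) := fun a ha b hb h => by
  rw [natCast_eq_natCast_iff', Nat.mod_eq_of_lt (mem_range.mp ha),
    Nat.mod_eq_of_lt (mem_range.mp hb)] at h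
  exact h

theorem natCast_sub_self_eq_neg {k : ℕ} (h : k ≤ n) : ((n - k : ℕ) : ZMod n) = -k := by
  rw [Nat.cast_sub h, natCast_self, zero_sub]

theorem sum_eq_sum_range [NeZero n] {M : Type*} [AddCommMonoid M] (f : ZMod n → M) :
    ∑ t, f t = ∑ k ∈ range n, f k :=
  sum_nbij' val Nat.cast (fun t _ => by simpa using val_lt t) (fun _ _ => mem_univ _)
    (fun t _ => natCast_zmod_val t) (fun k hk => val_cast_of_lt (mem_range.mp hk))
    (fun t _ => by rw [natCast_zmod_val])

theorem card_image_range_add {l : ℕ} (hl : l ≤ n) (a : ZMod n) :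
    #((range l).image fun i : ℕ => a + (i : ZMod n)) = l := by
  rw [card_image_of_injOn, card_range]
  exact ((add_right_injective a).comp_injOn
    (natCast_injOn_range.mono (range_subset_range.mpr hl)))

section Symmetric

variable (b : ZMod n → ℕ)

/-- Splitting `ZMod n` into `0`, the shifts `±1, …, ±J` and the `n - 2J - 1` remaining ones. -/
theorem sum_le_two_mul_sum_range_add [NeZero n] {m J : ℕ} (hb₀ : b 0 = 0)
    (hneg : ∀ t, b (-t) = b t) (hle : ∀ t, b t ≤ m) (hJ : 2 * J < n) :
    ∑ t, b t ≤ 2 * ∑ t ∈ range J, b ((t + 1 : ℕ) : ZMod n) + (n - (2 * J + 1)) * m := by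
  have hsplit : range n = range (J + 1 + (n - (2 * J + 1)) + J) := by congr 1; omega
  have hmiddle : ∑ k ∈ range (n - (2 * J + 1)), b ((J + 1 + k : ℕ) : ZMod n)
      ≤ (n - (2 * J + 1)) * m := by
    simpa using sum_le_sum fun k (_ : k ∈ range (n - (2 * J + 1))) =>
      hle ((J + 1 + k : ℕ) : ZMod n)
  have hnegative : ∑ k ∈ range J, b ((J + 1 + (n - (2 * J + 1)) + k : ℕ) : ZMod n)
      = ∑ t ∈ range J, b ((t + 1 : ℕ) : ZMod n) := by
    rw [← sum_range_reflect]
    refine sum_congr rfl fun t ht => ?_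
    have := mem_range.mp ht
    rw [show J + 1 + (n - (2 * J + 1)) + (J - 1 - t) = n - (t + 1) by omega,
      natCast_sub_self_eq_neg (by omega), hneg]
  rw [sum_eq_sum_range, hsplit, sum_range_add, sum_range_add, sum_range_succ', hnegative]
  simp only [Nat.cast_zero, hb₀, add_zero]
  omega

theorem mul_le_two_mul_sum_range (hadd : ∀ s t, b (s + t) ≤ b s + b t) (J : ℕ) :
    J * b ((J + 1 : ℕ) : ZMod n) ≤ 2 * ∑ t ∈ range J, b ((t + 1 : ℕ) : ZMod n) := by
  have hpair : ∀ t ∈ range J,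
      b ((J + 1 : ℕ) : ZMod n) ≤ b ((t + 1 : ℕ) : ZMod n) + b ((J - 1 - t + 1 : ℕ) : ZMod n) := by
    intro t ht
    have := mem_range.mp ht
    rw [show J + 1 = t + 1 + (J - 1 - t + 1) by omega, Nat.cast_add]
    exact hadd _ _
  have := card_nsmul_le_sum _ _ _ hpair
  rw [card_range, smul_eq_mul, sum_add_distrib,
    sum_range_reflect (fun t => b ((t + 1 : ℕ) : ZMod n))] at this
  omega

theorem sum_range_min_le_of_le_succ [NeZero n] {m J : ℕ} (hb₀ : b 0 = 0)
    (hneg : ∀ t, b (-t) = b t) (hle : ∀ t, b t ≤ m) (hsum : ∑ t, b t = m * (n - m))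
    (hJ : 2 * J < n) (hmJ : m ≤ J + 1) :
    ∑ t ∈ range J, min (t + 1) m ≤ ∑ t ∈ range J, b ((t + 1 : ℕ) : ZMod n) := by
  have h := sum_le_two_mul_sum_range_add b hb₀ hneg hle hJ
  have hT := two_mul_sum_range_min_of_le_succ hmJ
  rw [hsum, show n - m = (2 * J + 1 - m) + (n - (2 * J + 1)) by omega, Nat.mul_add,
    mul_comm m (n - _)] at h
  omega

theorem mul_succ_le_two_mul_sum_range [NeZero n] {m J : ℕ} (hb₀ : b 0 = 0)
    (hneg : ∀ t, b (-t) = b t) (hadd : ∀ s t, b (s + t) ≤ b s + b t) (hle : ∀ t, b t ≤ m)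
    (hsum : ∑ t, b t = m * (n - m)) (hm : 2 * m ≤ n) (hJm : J + 1 ≤ m) :
    J * (J + 1) ≤ 2 * ∑ t ∈ range J, b ((t + 1 : ℕ) : ZMod n) := by
  induction (show J ≤ m - 1 by omega) using Nat.decreasingInduction with
  | self =>
    rw [← two_mul_sum_range_min_of_succ_le hJm]
    exact Nat.mul_le_mul_left 2
      (sum_range_min_le_of_le_succ b hb₀ hneg hle hsum (by omega) (by omega))
  | of_succ k hk ih =>
    have hstep := mul_le_two_mul_sum_range b hadd k
    have hnext := ih (by omega)
    rw [sum_range_succ] at hnext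
    have : (k + 2) * (k * (k + 1)) ≤
        (k + 2) * (2 * ∑ t ∈ range k, b ((t + 1 : ℕ) : ZMod n)) := by
      nlinarith
    exact Nat.le_of_mul_le_mul_left this (by omega)

theorem sum_range_min_le_sum_range [NeZero n] {m J : ℕ} (hb₀ : b 0 = 0)
    (hneg : ∀ t, b (-t) = b t) (hadd : ∀ s t, b (s + t) ≤ b s + b t) (hle : ∀ t, b t ≤ m)
    (hsum : ∑ t, b t = m * (n - m)) (hm : 2 * m ≤ n) (hJ : 2 * J < n) :
    ∑ t ∈ range J, min (t + 1) m ≤ ∑ t ∈ range J, b ((t + 1 : ℕ) : ZMod n) := by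
  rcases le_or_gt m (J + 1) with hmJ | hJm
  · exact sum_range_min_le_of_le_succ b hb₀ hneg hle hsum hJ hmJ
  · have := two_mul_sum_range_min_of_succ_le hJm.le
    have := mul_succ_le_two_mul_sum_range b hb₀ hneg hadd hle hsum hm hJm.le
    omega

end Symmetric

end ZMod

theorem circulantGraph_adj_add_natCast {n j t : ℕ} (ht₀ : 0 < t) (htj : t ≤ j) (htn : t < n)
    (u : ZMod n) : (circulantGraph n j).Adj u (u + t) := by
  refine SimpleGraph.fromRel_adj _ _ _ |>.mpr ⟨?_, Or.inr ⟨t, ht₀, htj, add_sub_cancel_left u _⟩⟩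
  simpa using ZMod.natCast_ne_zero_of_pos_of_lt ht₀ htn

/-- The crossed case `u = u' + t'`, `u + t = u'` would force `t + t' = 0` in `ZMod n`. -/
theorem sym2_mk_add_natCast_inj {n j : ℕ} (hj : 2 * j < n) {u u' : ZMod n} {t t' : ℕ}
    (ht : 0 < t ∧ t ≤ j) (ht' : 0 < t' ∧ t' ≤ j) (h : s(u, u + t) = s(u', u' + t')) :
    t = t' ∧ u = u' := by
  rcases Sym2.eq_iff.mp h with ⟨rfl, h⟩ | ⟨rfl, h⟩
  · exact ⟨ZMod.natCast_injOn_range (mem_range.mpr (by omega)) (mem_range.mpr (by omega))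
      (add_left_cancel h), rfl⟩
  · refine absurd ?_
      (ZMod.natCast_ne_zero_of_pos_of_lt (n := n) (k := t + t') (by omega) (by omega))
    push_cast
    linear_combination h

theorem interiorCount_circulantGraph {n j : ℕ} [NeZero n] (hj : 2 * j < n)
    (S : Finset (ZMod n)) :
    interiorCount (circulantGraph n j) S =
      ∑ t ∈ range j, S.shiftOverlap ((t + 1 : ℕ) : ZMod n) := by
  simp only [shiftOverlap, interiorCount]
  rw [← card_sigma]
  symm
  refine card_bij (fun p _ => s(p.2, p.2 + ((p.1 + 1 : ℕ) : ZMod n))) ?_ ?_ ?_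
  · rintro ⟨t, u⟩ hp
    obtain ⟨ht, hu, hut⟩ : t < j ∧ u ∈ S ∧ u + ((t + 1 : ℕ) : ZMod n) ∈ S := by simpa using hp
    simp only [mem_filter, SimpleGraph.mem_edgeFinset, SimpleGraph.mem_edgeSet]
    exact ⟨circulantGraph_adj_add_natCast (by omega) (by omega) (by omega) u,
      fun v hv => by rcases Sym2.mem_iff.mp hv with rfl | rfl <;> assumption⟩
  · rintro ⟨t, u⟩ hp ⟨t', u'⟩ hp' h
    simp only [mem_sigma, mem_range] at hp hp'
    obtain ⟨htt, rfl⟩ := sym2_mk_add_natCast_inj (t := t + 1) (t' := t' + 1) hj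
      ⟨by omega, by omega⟩ ⟨by omega, by omega⟩ h
    obtain rfl : t = t' := by omega
    rfl
  · intro e he
    induction e using Sym2.ind with
    | _ u v =>
      simp only [mem_filter, SimpleGraph.mem_edgeFinset, SimpleGraph.mem_edgeSet] at he
      obtain ⟨hadj, hmem⟩ := he
      obtain ⟨x, t, ht₀, htj, hx, hxt, hedge⟩ : ∃ x : ZMod n, ∃ t : ℕ, 0 < t ∧ t ≤ j ∧ x ∈ S ∧
          x + t ∈ S ∧ s(x, x + t) = s(u, v) := by
        have hu := hmem u (Sym2.mem_mk_left u v)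
        have hv := hmem v (Sym2.mem_mk_right u v)
        rcases ((SimpleGraph.fromRel_adj _ _ _).mp hadj).2 with ⟨t, ht₀, htj, h⟩ | ⟨t, ht₀, htj, h⟩
        · rw [sub_eq_iff_eq_add'] at h
          exact ⟨v, t, ht₀, htj, hv, h ▸ hu, by rw [← h, Sym2.eq_swap]⟩
        · rw [sub_eq_iff_eq_add'] at h
          exact ⟨u, t, ht₀, htj, hu, h ▸ hv, by rw [← h]⟩
      refine ⟨⟨t - 1, x⟩, ?_, ?_⟩
      · simp only [mem_sigma, mem_range, mem_filter, Nat.sub_add_cancel ht₀]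
        exact ⟨by omega, hx, hxt⟩
      · simpa only [Nat.sub_add_cancel ht₀] using hedge

theorem interiorCount_circulantGraph_add_sum_shiftBoundary {n j : ℕ} [NeZero n] (hj : 2 * j < n)
    (S : Finset (ZMod n)) :
    interiorCount (circulantGraph n j) S + ∑ t ∈ range j, S.shiftBoundary ((t + 1 : ℕ) : ZMod n) =
      j * #S := by
  simp [interiorCount_circulantGraph hj, ← sum_add_distrib, shiftOverlap_add_shiftBoundary]

theorem min_mul_sub_min {l n : ℕ} (h : l ≤ n) :
    min l (n - l) * (n - min l (n - l)) = l * (n - l) := by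
  rcases le_total l (n - l) with h' | h'
  · rw [min_eq_left h']
  · rw [min_eq_right h', Nat.sub_sub_self h, mul_comm]

theorem circulant_consecutive_maximum_general (n j : ℕ) [NeZero n]
    (hj₂ : j < n / 2)
    (l : ℕ) (hl₂ : l ≤ n) (a : ZMod n)
    (S : Finset (ZMod n)) (hS : S.card = l) :
    interiorCount (circulantGraph n j) S ≤
      interiorCount (circulantGraph n j)
        ((Finset.range l).image (fun t => a + (t : ZMod n))) := by
  -- `range l` enters the statement through the coercion `Finset ℕ → Finset (ZMod n)` (a monadic
  -- bind), so first rewrite the set as the image of `i ↦ a + i`.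
  simp only [bind_pure_comp, fmap_def, image_image, Function.comp_def]
  set I := (range l).image fun i : ℕ => a + (i : ZMod n)
  have hj : 2 * j < n := by omega
  set m := min l (n - l)
  have hcap : ∀ T : Finset (ZMod n), #T = l → ∀ t, T.shiftBoundary t ≤ m := fun T hT t =>
    le_min (hT ▸ T.shiftBoundary_le_card t)
      (by simpa [card_compl, hT] using T.shiftBoundary_le_card_compl t)
  have hsum : ∑ t, S.shiftBoundary t = m * (n - m) := by
    rw [sum_shiftBoundary, ZMod.card, hS, min_mul_sub_min hl₂]
  have hS_lower := ZMod.sum_range_min_le_sum_range S.shiftBoundary S.shiftBoundary_zero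
    S.shiftBoundary_neg S.shiftBoundary_add_le (hcap S hS) hsum (by omega) hj
  have hI_upper : ∑ t ∈ range j, I.shiftBoundary ((t + 1 : ℕ) : ZMod n) ≤
      ∑ t ∈ range j, min (t + 1) m :=
    sum_le_sum fun t _ => le_min (shiftBoundary_image_range_le a l (t + 1))
      (hcap I (ZMod.card_image_range_add hl₂ a) _)
  have hS_count := interiorCount_circulantGraph_add_sum_shiftBoundary hj S
  have hI_count := interiorCount_circulantGraph_add_sum_shiftBoundary hj I
  rw [hS] at hS_count
  rw [ZMod.card_image_range_add hl₂ a] at hI_count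
  omega

/-- In the circulant graph `G(n; ±{1,…,j})` with `n ≥ 3` and
`1 ≤ j < ⌊n/2⌋`, any set of `l` consecutive vertices
`{a, a+1, …, a+l−1}` (mod `n`) induces a maximum subgraph on `l` vertices. -/
theorem circulant_consecutive_maximum (n j : ℕ) [NeZero n] (hn : 3 ≤ n)
    (hj₁ : 1 ≤ j) (hj₂ : j < n / 2)
    (l : ℕ) (hl₁ : 1 ≤ l) (hl₂ : l ≤ n) (a : ZMod n)
    (S : Finset (ZMod n)) (hS : S.card = l) :
    interiorCount (circulantGraph n j) S ≤
      interiorCount (circulantGraph n j)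
        ((Finset.range l).image (fun t => a + (t : ZMod n))) :=
  circulant_consecutive_maximum_general n j hj₂ l hl₂ a S hS
end

section
/- Let n ≥ 3, 1 ≤ j < ⌊n/2⌋, and let A = G(n; ±{1, …, j}) be the circulant graph. Then for 1 ≤ l ≤ n, the number of edges in a maximum subgraph of A on l vertices is ξ, where ξ = l(l−1)/2 if l ≤ j+1; ξ = l·j − j(j+1)/2 if j+1 < l ≤ n−j; and ξ = (1/2)·((n−l)² + (4j+1)·l − (2j+1)·n) if n−j < l ≤ n. That is, I_A(l) = ξ. -/
open scoped Classical

/-- `I_G(m)`: maximum number of interior edges over all `m`-subsets. -/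
noncomputable def maxSub {V : Type*} [Fintype V] (G : SimpleGraph V) (m : ℕ) : ℕ :=
  sSup {c | ∃ S : Finset V, S.card = m ∧ c = interiorCount G S}

/-!
Write `e(S)` for the number of arcs `(u, u + t)`, `1 ≤ t ≤ j`, inside `S`; since `2j < n` it is the
number of edges of `G(n; ±{1, …, j})` inside `S`. Every vertex starts `j` arcs, so the number of
arcs leaving `S` is `j|S| - e(S) = j|Sᶜ| - e(Sᶜ)`: large sets reduce to their complements, and small
sets have `e(S) ≤ |S|(|S| - 1)/2`. For `j < |S| ≤ n - j` the bound `e(S) ≤ j|S| - j(j+1)/2` is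
proved by induction on `n`: delete a vertex outside `S` and close up the cycle, which keeps every
arc inside `S`; once `|S| + j = n` the complement argument applies. The intervals `{0, …, l - 1}`
attain all three bounds.
-/

open Finset

lemma maxSub_eq_of_forall_le_of_exists {V : Type*} [Fintype V] {G : SimpleGraph V}
    {m c : ℕ}
    (hle : ∀ S : Finset V, #S = m → interiorCount G S ≤ c)
    (hex : ∃ S : Finset V, #S = m ∧ interiorCount G S = c) : maxSub G m = c := by
  obtain ⟨S, hS, hc⟩ := hex
  exact IsGreatest.csSup_eq ⟨⟨S, hS, hc.symm⟩, by rintro _ ⟨T, hT, rfl⟩; exact hle T hT⟩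

namespace Circulant

section Arcs

variable {G : Type*} [AddCommGroup G] [DecidableEq G]

noncomputable def arcs (D X Y : Finset G) : Finset (G × G) :=
  (X ×ˢ Y).filter fun p => p.2 - p.1 ∈ D

@[simp]
lemma mem_arcs {D X Y : Finset G} {p : G × G} :
    p ∈ arcs D X Y ↔ p.1 ∈ X ∧ p.2 ∈ Y ∧ p.2 - p.1 ∈ D := by
  simp [arcs, and_assoc]

lemma card_arcs_image_add_right (D S : Finset G) (c : G) :
    #(arcs D (S.image (· + c)) (S.image (· + c))) = #(arcs D S S) := by
  refine (card_equiv ((Equiv.addRight c).prodCongr (Equiv.addRight c)) fun p => ?_).symm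
  simp

lemma two_mul_card_arcs_le (D S : Finset G) (hD : ∀ x ∈ D, -x ∉ D) :
    2 * #(arcs D S S) ≤ #S * (#S - 1) := by
  have hdisj : Disjoint (arcs D S S) ((arcs D S S).image Prod.swap) := by
    refine disjoint_left.2 fun p hp hp' => ?_
    obtain ⟨q, hq, rfl⟩ := mem_image.1 hp'
    exact hD _ (mem_arcs.1 hq).2.2 (by simpa using (mem_arcs.1 hp).2.2)
  have hsub : arcs D S S ∪ (arcs D S S).image Prod.swap ⊆ S.offDiag := by
    have hoff : ∀ p ∈ arcs D S S, p ∈ S.offDiag := fun p hp => by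
      obtain ⟨h1, h2, h3⟩ := mem_arcs.1 hp
      refine mem_offDiag.2 ⟨h1, h2, fun h => hD _ h3 ?_⟩
      simpa [h] using h3
    intro p hp
    rcases mem_union.1 hp with hp | hp
    · exact hoff p hp
    · obtain ⟨q, hq, rfl⟩ := mem_image.1 hp
      obtain ⟨h1, h2, h3⟩ := mem_offDiag.1 (hoff q hq)
      exact mem_offDiag.2 ⟨h2, h1, Ne.symm h3⟩
  have := card_le_card hsub
  rw [card_union_of_disjoint hdisj, card_image_of_injective _ Prod.swap_injective,
    offDiag_card, ← Nat.mul_sub_one] at this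
  omega

variable [Fintype G]

lemma card_arcs_univ_right (D X : Finset G) : #(arcs D X univ) = #X * #D := by
  rw [← card_product]
  refine card_equiv ((Equiv.refl G).prodShear fun u => Equiv.subRight u) fun p => ?_
  simp

lemma card_arcs_univ_left (D Y : Finset G) : #(arcs D univ Y) = #Y * #D := by
  rw [← card_product]
  refine card_equiv ((Equiv.prodComm G G).trans
    ((Equiv.refl G).prodShear fun v => Equiv.subLeft v)) fun p => ?_
  simp

lemma card_arcs_add_card_arcs_compl_right (D X S : Finset G) :
    #(arcs D X S) + #(arcs D X Sᶜ) = #X * #D := by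
  rw [← card_arcs_univ_right,
    ← card_filter_add_card_filter_not (s := arcs D X univ) (fun p => p.2 ∈ S)]
  congr 1 <;> congr 1 <;> ext p <;> simp only [mem_arcs, mem_filter, mem_compl, mem_univ] <;> tauto

lemma card_arcs_add_card_arcs_compl_left (D Y S : Finset G) :
    #(arcs D S Y) + #(arcs D Sᶜ Y) = #Y * #D := by
  rw [← card_arcs_univ_left,
    ← card_filter_add_card_filter_not (s := arcs D univ Y) (fun p => p.1 ∈ S)]
  congr 1 <;> congr 1 <;> ext p <;> simp only [mem_arcs, mem_filter, mem_compl, mem_univ] <;> tauto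

/-- Both sides count the arcs leaving `S`: all `#S * #D` arcs starting in `S`, less those inside
`S`, equal all `#Sᶜ * #D` arcs ending in `Sᶜ`, less those inside `Sᶜ`. -/
lemma card_arcs_add_card_compl_mul (D S : Finset G) :
    #(arcs D S S) + #Sᶜ * #D = #(arcs D Sᶜ Sᶜ) + #S * #D := by
  have h1 := card_arcs_add_card_arcs_compl_right D S S
  have h2 := card_arcs_add_card_arcs_compl_left D Sᶜ S
  omega

lemma interiorCount_fromRel_sub_mem (D S : Finset G) (hD : ∀ x ∈ D, -x ∉ D) :
    interiorCount (SimpleGraph.fromRel fun u v => u - v ∈ D) S = #(arcs D S S) := by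
  have hinj : Set.InjOn (fun p : G × G => s(p.1, p.2)) (arcs D S S) := by
    rintro ⟨u, v⟩ huv ⟨u', v'⟩ huv' h
    rcases Sym2.eq_iff.1 h with ⟨rfl, rfl⟩ | ⟨rfl, rfl⟩
    · rfl
    · exact absurd (by simpa using (mem_arcs.1 huv').2.2) (hD _ (mem_arcs.1 huv).2.2)
  rw [interiorCount, ← card_image_of_injOn hinj]
  congr 1
  ext e
  induction e using Sym2.ind with | _ u v => ?_
  have h0 : (0 : G) ∉ D := fun h => hD 0 h (by simpa using h)
  simp only [mem_filter, SimpleGraph.mem_edgeFinset, SimpleGraph.mem_edgeSet,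
    SimpleGraph.fromRel_adj, Sym2.mem_iff, forall_eq_or_imp, forall_eq, mem_image, Prod.exists,
    mem_arcs, Sym2.eq_iff]
  constructor
  · rintro ⟨⟨-, h | h⟩, hu, hv⟩
    · exact ⟨v, u, ⟨hv, hu, h⟩, Or.inr ⟨rfl, rfl⟩⟩
    · exact ⟨u, v, ⟨hu, hv, h⟩, Or.inl ⟨rfl, rfl⟩⟩
  · rintro ⟨a, b, ⟨ha, hb, hab⟩, ⟨rfl, rfl⟩ | ⟨rfl, rfl⟩⟩
    · exact ⟨⟨fun h => h0 (by simpa [h] using hab), Or.inr hab⟩, ha, hb⟩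
    · exact ⟨⟨fun h => h0 (by simpa [h] using hab), Or.inl hab⟩, hb, ha⟩

end Arcs

def steps (n j : ℕ) : Finset (ZMod n) := (Icc 1 j).image Nat.cast

lemma card_steps {n j : ℕ} (hj : j < n) : #(steps n j) = j := by
  rw [steps, card_image_of_injOn, Nat.card_Icc, Nat.add_sub_cancel]
  exact (CharP.natCast_injOn_Iio (ZMod n) n).mono fun t ht => by
    simp only [coe_Icc, Set.mem_Icc] at ht; simp only [Set.mem_Iio]; omega

lemma neg_notMem_steps {n j : ℕ} (hj : 2 * j < n) : ∀ x ∈ steps n j, -x ∉ steps n j := by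
  simp only [steps, mem_image, mem_Icc, not_exists, not_and]
  rintro _ ⟨t, ⟨ht, htj⟩, rfl⟩ s ⟨hs, hsj⟩ hst
  have : n ∣ s + t := by
    rw [← ZMod.natCast_eq_zero_iff, Nat.cast_add, hst, neg_add_cancel]
  have := Nat.le_of_dvd (by omega) this
  omega

lemma circulantGraph_eq_fromRel (n j : ℕ) :
    circulantGraph n j = SimpleGraph.fromRel fun u v => u - v ∈ steps n j := by
  simp only [circulantGraph, steps, mem_image, mem_Icc, and_assoc, eq_comm]

lemma val_lt_of_ne_neg_one {n : ℕ} {w : ZMod (n + 1)} (hw : w ≠ -1) : w.val < n := by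
  refine lt_of_le_of_ne (Nat.lt_succ_iff.1 w.val_lt) fun h => hw ?_
  rw [← ZMod.natCast_zmod_val w, h, eq_neg_iff_add_eq_zero]
  exact_mod_cast ZMod.natCast_self (n + 1)

/-- Deleting the vertex `-1` and closing up the cycle: a step `t` across the deleted vertex
becomes a step `t - 1`, so arcs inside a set avoiding `-1` survive. -/
lemma natCast_val_sub_mem_steps {n j : ℕ} {u v : ZMod (n + 1)} (hu : u.val < n)
    (huv : v - u ∈ steps (n + 1) j) :
    (v.val : ZMod n) - (u.val : ZMod n) ∈ steps n j := by
  obtain ⟨t, ht, htv⟩ := mem_image.1 huv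
  rw [mem_Icc] at ht
  have hmod : v.val = (u.val + t) % (n + 1) := by
    rw [← ZMod.val_natCast, Nat.cast_add, ZMod.natCast_zmod_val, htv, add_sub_cancel]
  obtain ⟨q, hdiv⟩ : ∃ q, (n + 1) * q + v.val = u.val + t :=
    ⟨_, hmod ▸ Nat.div_add_mod (u.val + t) (n + 1)⟩
  have hq : q < t := by
    by_contra! h
    nlinarith
  refine mem_image.2 ⟨t - q, mem_Icc.2 ⟨by omega, by omega⟩, ?_⟩
  have hcast : ((v.val + q : ℕ) : ZMod n) = ((u.val + t : ℕ) : ZMod n) := by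
    rw [← hdiv]
    push_cast
    rw [ZMod.natCast_self]
    ring
  push_cast [Nat.cast_sub hq.le] at hcast ⊢
  linear_combination -hcast

lemma injOn_natCast_val (n : ℕ) :
    Set.InjOn (fun w : ZMod (n + 1) => (w.val : ZMod n)) {w | w.val < n} := fun _ hu _ hv h =>
  ZMod.val_injective _ (CharP.natCast_injOn_Iio (ZMod n) n hu hv h)

lemma card_arcs_le_card_arcs_image_val {n : ℕ} (j : ℕ) {S : Finset (ZMod (n + 1))}
    (hS : (-1 : ZMod (n + 1)) ∉ S) :
    #(arcs (steps (n + 1) j) S S) ≤ #(arcs (steps n j) (S.image fun w => (w.val : ZMod n))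
      (S.image fun w => (w.val : ZMod n))) := by
  have hval : ∀ w ∈ S, w.val < n := fun w hw =>
    val_lt_of_ne_neg_one (ne_of_mem_of_not_mem hw hS)
  refine card_le_card_of_injOn (Prod.map (fun w => (w.val : ZMod n)) fun w => (w.val : ZMod n))
    (fun p hp => ?_) fun p hp q hq hpq => ?_
  · obtain ⟨h1, h2, h3⟩ := mem_arcs.1 hp
    exact mem_arcs.2 ⟨mem_image_of_mem _ h1, mem_image_of_mem _ h2,
      natCast_val_sub_mem_steps (hval _ h1) h3⟩
  · obtain ⟨hp1, hp2, -⟩ := mem_arcs.1 hp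
    obtain ⟨hq1, hq2, -⟩ := mem_arcs.1 hq
    exact Prod.ext (injOn_natCast_val n (hval _ hp1) (hval _ hq1) congr($hpq.1))
      (injOn_natCast_val n (hval _ hp2) (hval _ hq2) congr($hpq.2))

lemma exists_card_arcs_le_of_card_lt {n : ℕ} (j : ℕ) {S : Finset (ZMod (n + 1))}
    (hS : #S < n + 1) :
    ∃ S' : Finset (ZMod n), #S' = #S ∧
      #(arcs (steps (n + 1) j) S S) ≤ #(arcs (steps n j) S' S') := by
  obtain ⟨x, -, hx⟩ := exists_mem_notMem_of_card_lt_card (s := S) (t := univ)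
    (by rwa [card_univ, ZMod.card])
  set T := S.image (· + (-1 - x))
  have hT : (-1 : ZMod (n + 1)) ∉ T := by
    simp only [T, mem_image, not_exists, not_and]
    intro u hu hux
    obtain rfl : u = x := by linear_combination hux
    exact hx hu
  have hval : ∀ w ∈ T, w.val < n := fun w hw =>
    val_lt_of_ne_neg_one (ne_of_mem_of_not_mem hw hT)
  refine ⟨T.image fun w => (w.val : ZMod n), ?_, ?_⟩
  · rw [card_image_of_injOn ((injOn_natCast_val n).mono hval),
      card_image_of_injective _ (add_left_injective _)]
  · rw [← card_arcs_image_add_right _ S (-1 - x)]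
    exact card_arcs_le_card_arcs_image_val j hT

lemma two_mul_card_arcs_add_le {n j : ℕ} (S : Finset (ZMod n)) (hjS : j < #S)
    (hSn : #S + j ≤ n) :
    2 * #(arcs (steps n j) S S) + j * (j + 1) ≤ 2 * (#S * j) := by
  induction n with
  | zero => omega
  | succ n ih =>
    rcases hSn.lt_or_eq with hlt | heq
    · obtain ⟨S', hcard, hle⟩ := exists_card_arcs_le_of_card_lt j (by omega : #S < n + 1)
      have := ih S' (hcard ▸ hjS) (by omega)
      rw [hcard] at this
      omega
    · have hc : #Sᶜ = j := by rw [card_compl, ZMod.card]; omega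
      have hcompl := card_arcs_add_card_compl_mul (steps (n + 1) j) S
      have hSc := two_mul_card_arcs_le (steps (n + 1) j) Sᶜ (neg_notMem_steps (by omega))
      rw [hc, card_steps (by omega)] at hcompl
      rw [hc] at hSc
      have : j * (j - 1) + j * (j + 1) = 2 * (j * j) := by cases j <;> simp; ring
      omega

def interval (n l : ℕ) : Finset (ZMod n) := (range l).image Nat.cast

lemma card_interval {n l : ℕ} (hl : l ≤ n) : #(interval n l) = l := by
  rw [interval, card_image_of_injOn, card_range]
  exact (CharP.natCast_injOn_Iio (ZMod n) n).mono fun a ha => by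
    simp only [coe_range, Set.mem_Iio] at ha ⊢; omega

lemma mem_interval {n l : ℕ} [NeZero n] (hl : l ≤ n) {x : ZMod n} :
    x ∈ interval n l ↔ x.val < l := by
  constructor
  · intro hx
    obtain ⟨a, ha, rfl⟩ := mem_image.1 hx
    rw [mem_range] at ha
    rwa [ZMod.val_cast_of_lt (by omega)]
  · exact fun h => mem_image.2 ⟨x.val, mem_range.2 h, ZMod.natCast_zmod_val x⟩

lemma compl_interval {n l : ℕ} [NeZero n] (hl : l ≤ n) :
    (interval n l)ᶜ = (interval n (n - l)).image (· + (l : ZMod n)) := by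
  refine (eq_of_subset_of_card_le (fun x hx => ?_) ?_).symm
  · obtain ⟨_, ha, rfl⟩ := mem_image.1 hx
    obtain ⟨b, hb, rfl⟩ := mem_image.1 ha
    rw [mem_range] at hb
    rw [mem_compl, mem_interval hl, ← Nat.cast_add, ZMod.val_cast_of_lt (by omega)]
    omega
  · rw [card_compl, ZMod.card, card_image_of_injective _ (add_left_injective _),
      card_interval (Nat.sub_le n l), card_interval hl]

lemma two_mul_sum_range_sub_add {l k : ℕ} (hkl : k ≤ l) :
    2 * ∑ t ∈ range k, (l - (t + 1)) + k * (k + 1) = 2 * (l * k) := by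
  induction k with
  | zero => simp
  | succ k ih =>
    have := ih (by omega)
    have : (k + 1) * (k + 1 + 1) = k * (k + 1) + 2 * (k + 1) := by ring
    have : l * (k + 1) = l * k + l := by ring
    rw [sum_range_succ]
    omega

/-- Counts the `∑_{t ≤ k} (l - t)` arcs `(a, a + t)` with `t ≤ k` inside the interval. -/
lemma le_card_arcs_interval {n j l k : ℕ} (hkj : k ≤ j) (hkl : k ≤ l) (hln : l ≤ n) :
    2 * (l * k) ≤ 2 * #(arcs (steps n j) (interval n l) (interval n l)) + k * (k + 1) := by
  have hinj := CharP.natCast_injOn_Iio (ZMod n) n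
  have hsum :
      ∑ t ∈ range k, (l - (t + 1)) ≤ #(arcs (steps n j) (interval n l) (interval n l)) :=
    calc ∑ t ∈ range k, (l - (t + 1)) = #((range k).sigma fun t => range (l - (t + 1))) := by
          simp [card_sigma]
      _ ≤ _ := by
        refine card_le_card_of_injOn
          (fun x => ((x.2 : ZMod n), ((x.2 + (x.1 + 1) : ℕ) : ZMod n)))
          (fun ⟨t, a⟩ hx => ?_) fun ⟨t, a⟩ hx ⟨t', a'⟩ hx' h => ?_
        · dsimp only
          simp only [coe_sigma, Set.mem_sigma_iff, coe_range, Set.mem_Iio] at hx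
          refine mem_arcs.2 ⟨mem_image.2 ⟨a, mem_range.2 (by omega), rfl⟩,
            mem_image.2 ⟨_, mem_range.2 (by omega), rfl⟩,
            mem_image.2 ⟨t + 1, mem_Icc.2 ⟨by omega, by omega⟩, ?_⟩⟩
          push_cast
          ring
        · simp only [coe_sigma, Set.mem_sigma_iff, coe_range, Set.mem_Iio] at hx hx'
          simp only [Prod.mk.injEq] at h
          have ha : a = a' := hinj (by simp; omega) (by simp; omega) h.1
          have ht : a + (t + 1) = a' + (t' + 1) := hinj (by simp; omega) (by simp; omega) h.2
          subst ha
          obtain rfl : t = t' := by omega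
          rfl
  have := two_mul_sum_range_sub_add (l := l) hkl
  omega

lemma two_mul_card_arcs_interval {n j l : ℕ} (hj : 2 * j < n) (hl : l ≤ j + 1) (hln : l ≤ n) :
    2 * #(arcs (steps n j) (interval n l) (interval n l)) = l * (l - 1) := by
  have hle := two_mul_card_arcs_le _ (interval n l) (neg_notMem_steps hj)
  have hge := le_card_arcs_interval (n := n) (j := j) (k := l - 1) (by omega) (by omega) hln
  rw [card_interval hln] at hle
  have : (l - 1) * (l - 1 + 1) = l * (l - 1) := by cases l <;> simp [mul_comm]
  omega

def maxSubValue (n j l : ℕ) : ℕ :=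
  if l ≤ j + 1 then l * (l - 1) / 2
  else if l ≤ n - j then l * j - j * (j + 1) / 2
  else ((n - l) ^ 2 + (4 * j + 1) * l - (2 * j + 1) * n) / 2

lemma two_mul_maxSubValue_large {n j l : ℕ} (hj : 2 * j < n) (hl : n - j < l) (hln : l ≤ n) :
    2 * (((n - l) ^ 2 + (4 * j + 1) * l - (2 * j + 1) * n) / 2) + 2 * ((n - l) * j) =
      (n - l) * (n - l - 1) + 2 * (l * j) := by
  obtain ⟨m, rfl⟩ : ∃ m, n = l + m := ⟨n - l, by omega⟩
  rw [Nat.add_sub_cancel_left]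
  have : m ^ 2 = m * (m - 1) + m := by cases m <;> simp [pow_two, mul_add, add_mul]
  have := (Nat.even_mul_pred_self m).two_dvd
  have : (4 * j + 1) * l = 4 * (l * j) + l := by ring
  have : (2 * j + 1) * (l + m) = 2 * (l * j) + 2 * (m * j) + l + m := by ring
  have : m * j + j ≤ l * j := by nlinarith [show m + 1 ≤ l by omega]
  omega

lemma card_arcs_le_maxSubValue {n j : ℕ} [NeZero n] (hj : 2 * j < n) (S : Finset (ZMod n)) :
    #(arcs (steps n j) S S) ≤ maxSubValue n j #S := by
  have hD := neg_notMem_steps hj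
  have hSn : #S ≤ n := by simpa using card_le_univ S
  unfold maxSubValue
  split_ifs with h₁ h₂
  · have := two_mul_card_arcs_le _ S hD
    omega
  · have := two_mul_card_arcs_add_le (j := j) S (by omega) (by omega)
    have := (Nat.even_mul_succ_self j).two_dvd
    omega
  · have hcompl := card_arcs_add_card_compl_mul (steps n j) S
    have hSc := two_mul_card_arcs_le _ Sᶜ hD
    have := two_mul_maxSubValue_large hj (by omega) hSn
    rw [card_compl, ZMod.card] at hcompl hSc
    rw [card_steps (by omega)] at hcompl
    omega

lemma card_arcs_interval_eq_maxSubValue {n j l : ℕ} [NeZero n] (hj : 2 * j < n) (hln : l ≤ n) :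
    #(arcs (steps n j) (interval n l) (interval n l)) = maxSubValue n j l := by
  unfold maxSubValue
  split_ifs with h₁ h₂
  · have := two_mul_card_arcs_interval hj h₁ hln
    omega
  · have := two_mul_card_arcs_add_le (n := n) (j := j) (interval n l)
      (by rw [card_interval hln]; omega) (by rw [card_interval hln]; omega)
    have := le_card_arcs_interval (n := n) (j := j) le_rfl (by omega) hln
    have := (Nat.even_mul_succ_self j).two_dvd
    rw [card_interval hln] at *
    omega
  · have hcompl := card_arcs_add_card_compl_mul (steps n j) (interval n l)
    have hIc := two_mul_card_arcs_interval (l := n - l) hj (by omega) (by omega)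
    have := two_mul_maxSubValue_large hj (by omega) hln
    rw [card_compl, ZMod.card, card_steps (by omega), card_interval hln, compl_interval hln,
      card_arcs_image_add_right] at hcompl
    omega

end Circulant

theorem circulant_maxSub_eq_general (n j : ℕ) [NeZero n]
    (hj₂ : j < n / 2)
    (l : ℕ) (hl₂ : l ≤ n) :
    maxSub (circulantGraph n j) l =
      if l ≤ j + 1 then l * (l - 1) / 2
      else if l ≤ n - j then l * j - j * (j + 1) / 2
      else ((n - l) ^ 2 + (4 * j + 1) * l - (2 * j + 1) * n) / 2 := by
  have hj : 2 * j < n := by omega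
  have hD := Circulant.neg_notMem_steps hj
  rw [Circulant.circulantGraph_eq_fromRel]
  refine maxSub_eq_of_forall_le_of_exists (fun S hS => ?_)
    ⟨Circulant.interval n l, Circulant.card_interval hl₂, ?_⟩
  · rw [Circulant.interiorCount_fromRel_sub_mem _ _ hD, ← hS]
    exact Circulant.card_arcs_le_maxSubValue hj S
  · rw [Circulant.interiorCount_fromRel_sub_mem _ _ hD]
    exact Circulant.card_arcs_interval_eq_maxSubValue hj hl₂

/-- In `G(n; ±{1,…,j})` with `n ≥ 3`, `1 ≤ j < ⌊n/2⌋`, the number of edges in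
a maximum subgraph on `l` vertices (`1 ≤ l ≤ n`) is
`l(l−1)/2` if `l ≤ j+1`; `lj − j(j+1)/2` if `j+1 < l ≤ n−j`; and
`((n−l)² + (4j+1)l − (2j+1)n)/2` if `n−j < l ≤ n`. -/
theorem circulant_maxSub_eq (n j : ℕ) [NeZero n] (hn : 3 ≤ n)
    (hj₁ : 1 ≤ j) (hj₂ : j < n / 2)
    (l : ℕ) (hl₁ : 1 ≤ l) (hl₂ : l ≤ n) :
    maxSub (circulantGraph n j) l =
      if l ≤ j + 1 then l * (l - 1) / 2
      else if l ≤ n - j then l * j - j * (j + 1) / 2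
      else ((n - l) ^ 2 + (4 * j + 1) * l - (2 * j + 1) * n) / 2 :=
  circulant_maxSub_eq_general n j hj₂ l hl₂
end
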